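/- arXiv:1806.05801 — 10 statements merged into one kernel-verified Lean document; each statement's English description precedes it below -/
import Mathlib

section
/- Let ℓ ≥ 1, s ≥ 0 be integers, a = (a_0, …, a_ℓ) ∈ ℝ^{ℓ+1}, and let A_{s,a} be the (ℓ+1)×(ℓ+1) real matrix whose entry in row i and column j (1 ≤ i ≤ ℓ, 1 ≤ j ≤ ℓ+1) is ((i-1)(ℓ+1) + j)^{ℓ-1} and whose last row is (0^s·a_0, 1^s·a_1, …, ℓ^s·a_ℓ) (with the convention 0^0 = 1). Let ξ ∈ ℝ, h ≠ 0, and let q_a be the unique polynomial of degree at most ℓ with q_a(ξ + i·h) = a_i for i = 0, …, ℓ. Then for an integer m with 0 ≤ m ≤ ℓ, the polynomial q_a has degree exactly ℓ - m if and only if det(A_{s,a}) = 0 for all s = 0, …, m-1 and det(A_{m,a}) ≠ 0. -/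
open Polynomial Finset

/-- coeff of taylor 1 P -/
lemma coeff_taylor_one (P : ℝ[X]) (N k : ℕ) (hN : P.natDegree < N) :
    (Polynomial.taylor 1 P).coeff k = ∑ i ∈ Finset.range N, P.coeff i * (i.choose k) := by
  conv_lhs => rw [P.as_sum_range' N hN]
  rw [map_sum, finset_sum_coeff]
  refine Finset.sum_congr rfl fun i _ => ?_
  rw [taylor_apply, ← C_mul_X_pow_eq_monomial, mul_comp, pow_comp, C_comp, X_comp,
    coeff_C_mul, coeff_X_add_C_pow]
  simp

lemma delta_coeff_top (P : ℝ[X]) (n : ℕ) (hP : P.degree ≤ (n : ℕ) + 1) :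
    (Polynomial.taylor 1 P - P).coeff n = ((n : ℝ) + 1) * P.coeff (n + 1) := by
  have hnd : P.natDegree < n + 2 := by
    have := Polynomial.natDegree_le_iff_degree_le.mpr (by exact_mod_cast hP)
    omega
  rw [coeff_sub, coeff_taylor_one P (n + 2) n hnd]
  rw [Finset.sum_range_succ, Finset.sum_range_succ]
  have h0 : ∑ i ∈ Finset.range n, P.coeff i * (i.choose n : ℝ) = 0 := by
    refine Finset.sum_eq_zero fun i hi => ?_
    rw [Nat.choose_eq_zero_of_lt (Finset.mem_range.mp hi)]
    simp
  rw [h0]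
  simp [Nat.choose_succ_self_right]
  ring

lemma delta_degree (P : ℝ[X]) (n : ℕ) (hP : P.degree ≤ (n : ℕ) + 1) :
    (Polynomial.taylor 1 P - P).degree ≤ (n : ℕ) := by
  have hnd : P.natDegree < n + 2 := by
    have := Polynomial.natDegree_le_iff_degree_le.mpr (by exact_mod_cast hP)
    omega
  rw [Polynomial.degree_le_iff_coeff_zero]
  intro k hk
  have hk' : n < k := by exact_mod_cast hk
  rw [coeff_sub, coeff_taylor_one P (n + 2) k hnd]
  have hPk : ∀ i, n + 1 < i → P.coeff i = 0 := by
    intro i hi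
    apply Polynomial.coeff_eq_zero_of_degree_lt
    exact lt_of_le_of_lt hP (by exact_mod_cast hi)
  rcases Nat.lt_or_ge (n+1) k with hk2 | hk2
  · have h0 : ∑ i ∈ Finset.range (n+2), P.coeff i * (i.choose k : ℝ) = 0 := by
      refine Finset.sum_eq_zero fun i hi => ?_
      rw [Nat.choose_eq_zero_of_lt (by have := Finset.mem_range.mp hi; omega)]
      simp
    rw [h0, hPk k hk2, sub_zero]
  · have hkn : k = n + 1 := by omega
    subst hkn
    rw [Finset.sum_range_succ]
    have h0 : ∑ i ∈ Finset.range (n+1), P.coeff i * (i.choose (n+1) : ℝ) = 0 := by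
      refine Finset.sum_eq_zero fun i hi => ?_
      rw [Nat.choose_eq_zero_of_lt (Finset.mem_range.mp hi)]
      simp
    rw [h0]
    simp

lemma iter_fwdDiff_poly (n : ℕ) (P : ℝ[X]) (hP : P.degree ≤ (n : ℕ)) :
    (fwdDiff 1)^[n] (fun x : ℝ => P.eval x) = fun _ => (n.factorial : ℝ) * P.coeff n := by
  induction n generalizing P with
  | zero =>
    funext x
    simp only [Function.iterate_zero, id_eq]
    have hC := Polynomial.eq_C_of_degree_le_zero (p := P) (by exact_mod_cast hP)
    rw [hC]
    simp
  | succ n ih =>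
    have hstep : fwdDiff 1 (fun x : ℝ => P.eval x) =
        fun x : ℝ => (Polynomial.taylor 1 P - P).eval x := by
      funext x
      simp [fwdDiff, taylor_apply, eval_comp]
    rw [Function.iterate_succ_apply, hstep,
      ih _ (delta_degree P n (by exact_mod_cast hP)),
      delta_coeff_top P n (by exact_mod_cast hP)]
    funext x
    rw [Nat.factorial_succ]
    push_cast
    ring

lemma alt_sum (n : ℕ) (P : ℝ[X]) (hP : P.degree ≤ (n : ℕ)) :
    ∑ j ∈ Finset.range (n + 1), (-1 : ℝ) ^ j * (n.choose j) * P.eval (j : ℝ) =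
      (-1 : ℝ) ^ n * (n.factorial : ℝ) * P.coeff n := by
  have h := fwdDiff_iter_eq_sum_shift (1 : ℝ) (fun x : ℝ => P.eval x) n 0
  rw [iter_fwdDiff_poly n P hP] at h
  have h2 : ∀ j ∈ Finset.range (n + 1),
      (((-1 : ℤ) ^ (n - j) * (n.choose j) : ℤ)) • (P.eval ((0 : ℝ) + j • (1:ℝ)))
        = (-1 : ℝ) ^ n * ((-1 : ℝ) ^ j * (n.choose j) * P.eval (j : ℝ)) := by
    intro j hj
    have hjn : j ≤ n := by have := Finset.mem_range.mp hj; omega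
    have hj2 : (-1 : ℝ) ^ j * (-1 : ℝ) ^ j = 1 := by
      rw [← pow_add, ← two_mul, pow_mul]; norm_num
    have hsgn : ((-1 : ℝ)) ^ (n - j) = (-1 : ℝ) ^ n * (-1 : ℝ) ^ j :=
      calc ((-1:ℝ)) ^ (n-j) = (-1:ℝ)^(n-j) * ((-1:ℝ)^j * (-1:ℝ)^j) := by rw [hj2, mul_one]
        _ = ((-1:ℝ)^(n-j) * (-1:ℝ)^j) * (-1:ℝ)^j := by ring
        _ = (-1:ℝ)^n * (-1:ℝ)^j := by rw [← pow_add, Nat.sub_add_cancel hjn]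
    push_cast
    simp only [zsmul_eq_mul, nsmul_eq_mul, mul_one, zero_add]
    push_cast
    rw [hsgn]
    ring
  rw [Finset.sum_congr rfl h2, ← Finset.mul_sum] at h
  have : (-1 : ℝ) ^ n * ((n.factorial : ℝ) * P.coeff n) = (-1:ℝ)^n * ((-1:ℝ)^n * ∑ j ∈ Finset.range (n+1), (-1:ℝ)^j * (n.choose j) * P.eval (j : ℝ)) := by
    rw [← h]
  have hnn : (-1 : ℝ) ^ n * (-1 : ℝ) ^ n = 1 := by
    rw [← pow_add, ← two_mul, pow_mul]; norm_num
  rw [← mul_assoc ((-1:ℝ)^n) ((-1:ℝ)^n), hnn, one_mul] at this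
  linarith [this]

/-- The matrix `A_{s,a}`: rows `1,…,ℓ` (here `i : Fin (ℓ+1)` with `(i:ℕ) < ℓ`) have entries
`((i)(ℓ+1) + j + 1)^{ℓ-1}` (1-indexed: `((i-1)(ℓ+1)+j)^{ℓ-1}`), and the last row is
`(0^s a_0, 1^s a_1, …, ℓ^s a_ℓ)` (with the convention `0^0 = 1`, as in Lean). -/
def matA (ℓ s : ℕ) (a : Fin (ℓ + 1) → ℝ) : Matrix (Fin (ℓ + 1)) (Fin (ℓ + 1)) ℝ :=
  fun i j =>
    if (i : ℕ) < ℓ then (((i : ℕ) * (ℓ + 1) + (j : ℕ) + 1 : ℕ) : ℝ) ^ (ℓ - 1)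
    else ((j : ℕ) : ℝ) ^ s * a j

def wv (ℓ : ℕ) : Fin (ℓ + 1) → ℝ := fun j => (-1 : ℝ) ^ (j : ℕ) * (ℓ.choose (j : ℕ))

def matN (ℓ : ℕ) : Matrix (Fin (ℓ + 1)) (Fin (ℓ + 1)) ℝ :=
  fun i j =>
    if (i : ℕ) < ℓ then (((i : ℕ) * (ℓ + 1) + (j : ℕ) + 1 : ℕ) : ℝ) ^ (ℓ - 1)
    else wv ℓ j

lemma matN_row_eval (ℓ : ℕ) (i j : Fin (ℓ + 1)) (hi : (i : ℕ) < ℓ) :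
    matN ℓ i j = ((X + C (((i : ℕ) * (ℓ + 1) + 1 : ℕ) : ℝ)) ^ (ℓ - 1)).eval ((j : ℕ) : ℝ) := by
  simp only [matN, if_pos hi, eval_pow, eval_add, eval_X, eval_C]
  push_cast
  ring_nf

lemma orth (ℓ : ℕ) (hℓ : 1 ≤ ℓ) (i : Fin (ℓ + 1)) (hi : (i : ℕ) < ℓ) :
    ∑ j : Fin (ℓ + 1), wv ℓ j * matN ℓ i j = 0 := by
  set P : ℝ[X] := (X + C (((i : ℕ) * (ℓ + 1) + 1 : ℕ) : ℝ)) ^ (ℓ - 1) with hP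
  have h1 : ∀ j : Fin (ℓ + 1), wv ℓ j * matN ℓ i j =
      (fun n : ℕ => (-1 : ℝ) ^ n * (ℓ.choose n) * P.eval ((n : ℕ) : ℝ)) (j : ℕ) := by
    intro j
    rw [matN_row_eval ℓ i j hi]
    simp only [wv, hP]
  rw [Finset.sum_congr rfl (fun j _ => h1 j),
    Fin.sum_univ_eq_sum_range (fun n : ℕ => (-1 : ℝ) ^ n * (ℓ.choose n) * P.eval ((n : ℕ) : ℝ)) (ℓ + 1)]
  have hdeg : P.degree ≤ (ℓ : ℕ) := by
    refine le_trans (Polynomial.degree_pow_le _ _) ?_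
    calc (ℓ - 1 : ℕ) • (X + C (((i : ℕ) * (ℓ + 1) + 1 : ℕ) : ℝ)).degree
        ≤ (ℓ - 1 : ℕ) • (1 : WithBot ℕ) := by
          apply nsmul_le_nsmul_right
          exact le_of_eq (Polynomial.degree_X_add_C _)
      _ ≤ (ℓ : ℕ) := by
          simp only [nsmul_eq_mul, mul_one]
          exact_mod_cast Nat.cast_le.mpr (Nat.sub_le ℓ 1)
  rw [alt_sum ℓ P hdeg, hP, coeff_X_add_C_pow,
    Nat.choose_eq_zero_of_lt (by omega : ℓ - 1 < ℓ)]
  simp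

lemma wv_zero (ℓ : ℕ) : wv ℓ 0 = 1 := by
  simp [wv]

lemma wv_norm_pos (ℓ : ℕ) : 0 < ∑ j : Fin (ℓ + 1), (wv ℓ j) ^ 2 := by
  refine Finset.sum_pos' (fun i _ => sq_nonneg _) ⟨0, Finset.mem_univ _, ?_⟩
  rw [wv_zero]
  norm_num

lemma matN_last (ℓ : ℕ) (j : Fin (ℓ + 1)) : matN ℓ (Fin.last ℓ) j = wv ℓ j := by
  simp [matN]

lemma val_lt_iff_ne_last (ℓ : ℕ) (i : Fin (ℓ + 1)) : (i : ℕ) < ℓ ↔ i ≠ Fin.last ℓ := by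
  rw [Fin.ne_iff_vne, Fin.val_last]
  have := i.isLt
  omega

lemma detN_ne (ℓ : ℕ) (hℓ : 1 ≤ ℓ) : (matN ℓ).det ≠ 0 := by
  intro hdet
  obtain ⟨v, hv0, hv⟩ := Matrix.exists_vecMul_eq_zero_iff.mpr hdet
  have hj : ∀ j : Fin (ℓ + 1), ∑ i, v i * matN ℓ i j = 0 := by
    intro j
    have := congrFun hv j
    simpa [Matrix.vecMul, dotProduct] using this
  -- step 1 : v last = 0
  have hswap : ∑ i, v i * ∑ j, wv ℓ j * matN ℓ i j = 0 :=
    calc ∑ i, v i * ∑ j, wv ℓ j * matN ℓ i j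
        = ∑ i : Fin (ℓ+1), ∑ j : Fin (ℓ+1), wv ℓ j * (v i * matN ℓ i j) := by
          refine Finset.sum_congr rfl fun i _ => ?_
          rw [Finset.mul_sum]
          exact Finset.sum_congr rfl fun j _ => by ring
      _ = ∑ j : Fin (ℓ+1), ∑ i : Fin (ℓ+1), wv ℓ j * (v i * matN ℓ i j) := Finset.sum_comm
      _ = ∑ j, wv ℓ j * ∑ i, v i * matN ℓ i j := by
          refine Finset.sum_congr rfl fun j _ => ?_
          rw [Finset.mul_sum]
      _ = 0 := Finset.sum_eq_zero fun j _ => by rw [hj j, mul_zero]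
  have hlast : v (Fin.last ℓ) = 0 := by
    have hsingle : ∑ i, v i * ∑ j, wv ℓ j * matN ℓ i j
        = v (Fin.last ℓ) * ∑ j : Fin (ℓ + 1), (wv ℓ j) ^ 2 := by
      rw [Finset.sum_eq_single (Fin.last ℓ)]
      · congr 1
        refine Finset.sum_congr rfl fun j _ => ?_
        rw [matN_last, sq]
      · intro i _ hne
        rw [orth ℓ hℓ i ((val_lt_iff_ne_last ℓ i).mpr hne), mul_zero]
      · intro hmem; exact absurd (Finset.mem_univ _) hmem
    rw [hsingle] at hswap
    exact (mul_eq_zero.mp hswap).resolve_right (ne_of_gt (wv_norm_pos ℓ))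
  -- step 2 : remaining coefficients vanish
  set c : Fin ℓ → ℝ := fun t => (((t : ℕ) * (ℓ + 1) + 1 : ℕ) : ℝ) with hc
  set P : ℝ[X] := ∑ t : Fin ℓ, C (v (Fin.castSucc t)) *
      (X + C (c t)) ^ (ℓ - 1) with hPdef
  have hPeval : ∀ j : Fin (ℓ + 1), P.eval ((j : ℕ) : ℝ) = 0 := by
    intro j
    have hsplit := Fin.sum_univ_castSucc (f := fun i => v i * matN ℓ i j)
    rw [hj j, hlast, zero_mul, add_zero] at hsplit
    rw [hPdef, eval_finset_sum]
    have heq : ∑ t : Fin ℓ, (C (v (Fin.castSucc t)) * (X + C (c t)) ^ (ℓ - 1)).eval ((j:ℕ):ℝ)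
        = ∑ t : Fin ℓ, v (Fin.castSucc t) * matN ℓ (Fin.castSucc t) j := by
      refine Finset.sum_congr rfl fun t _ => ?_
      rw [matN_row_eval ℓ (Fin.castSucc t) j (by simpa using t.isLt)]
      simp [hc]
    rw [heq]
    exact hsplit.symm
  have hPzero : P = 0 := by
    apply Polynomial.eq_zero_of_natDegree_lt_card_of_eval_eq_zero P
      (f := fun j : Fin (ℓ + 1) => ((j : ℕ) : ℝ))
    · intro x y hxy
      simp only at hxy
      exact Fin.ext (by exact_mod_cast hxy)
    · exact hPeval
    · rw [Fintype.card_fin]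
      have : P.natDegree ≤ ℓ - 1 := by
        rw [hPdef]
        refine Polynomial.natDegree_sum_le_of_forall_le _ _ fun t _ => ?_
        refine le_trans (Polynomial.natDegree_C_mul_le _ _) ?_
        refine le_trans (Polynomial.natDegree_pow_le) ?_
        have : (X + C (c t)).natDegree ≤ 1 := le_of_eq (Polynomial.natDegree_X_add_C _)
        calc (ℓ-1) * (X + C (c t)).natDegree ≤ (ℓ-1) * 1 := Nat.mul_le_mul_left _ this
          _ = ℓ - 1 := by omega
      omega
  have hcoeff : ∀ u : Fin ℓ, ∑ t : Fin ℓ, v (Fin.castSucc t) * (c t) ^ (u : ℕ) = 0 := by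
    intro u
    have hu : (u : ℕ) ≤ ℓ - 1 := by have := u.isLt; omega
    have h1 : P.coeff (ℓ - 1 - (u : ℕ)) = 0 := by rw [hPzero]; simp
    rw [hPdef, finset_sum_coeff] at h1
    have h2 : ∀ t : Fin ℓ, (C (v (Fin.castSucc t)) * (X + C (c t)) ^ (ℓ - 1)).coeff (ℓ - 1 - (u : ℕ))
        = (v (Fin.castSucc t) * (c t) ^ (u : ℕ)) * ((ℓ-1).choose (ℓ - 1 - (u : ℕ))) := by
      intro t
      rw [coeff_C_mul, coeff_X_add_C_pow]
      have : ℓ - 1 - (ℓ - 1 - (u : ℕ)) = (u : ℕ) := by omega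
      rw [this]
      ring
    rw [Finset.sum_congr rfl (fun t _ => h2 t), ← Finset.sum_mul] at h1
    have hch : ((ℓ-1).choose (ℓ - 1 - (u : ℕ)) : ℝ) ≠ 0 := by
      have := Nat.choose_pos (show ℓ - 1 - (u : ℕ) ≤ ℓ - 1 by omega)
      exact_mod_cast this.ne'
    exact (mul_eq_zero.mp h1).resolve_right hch
  have hvt : ∀ t : Fin ℓ, v (Fin.castSucc t) = 0 := by
    have := Matrix.eq_zero_of_forall_pow_sum_mul_pow_eq_zero (R := ℝ)
      (f := c) (v := fun t => v (Fin.castSucc t)) ?_ ?_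
    · intro t; exact congrFun this t
    · intro x y hxy
      have h1 : (x : ℕ) * (ℓ + 1) + 1 = (y : ℕ) * (ℓ + 1) + 1 := by
        have h0 := hxy
        simp only [hc] at h0
        exact_mod_cast h0
      have h3 : (x:ℕ) * (ℓ+1) = (y:ℕ) * (ℓ+1) := by omega
      exact Fin.ext (Nat.eq_of_mul_eq_mul_right (by omega) h3)
    · exact hcoeff
  apply hv0
  funext i
  by_cases hi : i = Fin.last ℓ
  · rw [hi]; exact hlast
  · have : (i : ℕ) < ℓ := (val_lt_iff_ne_last ℓ i).mpr hi
    have := hvt ⟨(i : ℕ), this⟩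
    simpa [Fin.castSucc, Fin.ext_iff] using this

lemma det_formula (ℓ : ℕ) (hℓ : 1 ≤ ℓ) (b : Fin (ℓ + 1) → ℝ) :
    ((matN ℓ).updateRow (Fin.last ℓ) b).det * (∑ j : Fin (ℓ + 1), (wv ℓ j) ^ 2)
      = (∑ j : Fin (ℓ + 1), wv ℓ j * b j) * (matN ℓ).det := by
  set β : Fin (ℓ + 1) → ℝ := Matrix.vecMul b (matN ℓ)⁻¹ with hβ
  have hb : b = ∑ i, β i • matN ℓ i := by
    have h1 : Matrix.vecMul β (matN ℓ) = b := by
      rw [hβ, Matrix.vecMul_vecMul, Matrix.nonsing_inv_mul _ (Ne.isUnit (detN_ne ℓ hℓ)), Matrix.vecMul_one]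
    funext j
    rw [← h1]
    simp [Matrix.vecMul, dotProduct, Finset.sum_apply]
  have hdet : ((matN ℓ).updateRow (Fin.last ℓ) b).det = β (Fin.last ℓ) * (matN ℓ).det := by
    rw [hb]
    have := Matrix.det_updateRow_sum (matN ℓ) (Fin.last ℓ) β
    rw [this, smul_eq_mul]
  have hdot : ∑ j : Fin (ℓ + 1), wv ℓ j * b j
      = β (Fin.last ℓ) * ∑ j : Fin (ℓ + 1), (wv ℓ j) ^ 2 := by
    rw [hb]
    calc ∑ j : Fin (ℓ+1), wv ℓ j * (∑ i, β i • matN ℓ i) j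
        = ∑ j : Fin (ℓ+1), ∑ i : Fin (ℓ+1), β i * (wv ℓ j * matN ℓ i j) := by
          refine Finset.sum_congr rfl fun j _ => ?_
          rw [Finset.sum_apply, Finset.mul_sum]
          exact Finset.sum_congr rfl fun i _ => by simp [Pi.smul_apply]; ring
      _ = ∑ i : Fin (ℓ+1), ∑ j : Fin (ℓ+1), β i * (wv ℓ j * matN ℓ i j) := Finset.sum_comm
      _ = ∑ i : Fin (ℓ+1), β i * ∑ j : Fin (ℓ+1), wv ℓ j * matN ℓ i j := by
          refine Finset.sum_congr rfl fun i _ => ?_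
          rw [Finset.mul_sum]
      _ = β (Fin.last ℓ) * ∑ j : Fin (ℓ+1), (wv ℓ j) ^ 2 := by
          rw [Finset.sum_eq_single (Fin.last ℓ)]
          · congr 1
            refine Finset.sum_congr rfl fun j _ => ?_
            rw [matN_last, sq]
          · intro i _ hne
            rw [orth ℓ hℓ i ((val_lt_iff_ne_last ℓ i).mpr hne), mul_zero]
          · intro hmem; exact absurd (Finset.mem_univ _) hmem
  rw [hdet, hdot]
  ring

lemma matA_eq (ℓ s : ℕ) (a : Fin (ℓ + 1) → ℝ) :
    matA ℓ s a = (matN ℓ).updateRow (Fin.last ℓ) (fun j => ((j : ℕ) : ℝ) ^ s * a j) := by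
  funext i j
  rw [Matrix.updateRow_apply]
  by_cases hi : i = Fin.last ℓ
  · rw [if_pos hi, matA, if_neg (by rw [hi]; simp)]
  · rw [if_neg hi, matA, matN, if_pos ((val_lt_iff_ne_last ℓ i).mpr hi),
      if_pos ((val_lt_iff_ne_last ℓ i).mpr hi)]

lemma det_matA_eq_zero_iff (ℓ s : ℕ) (hℓ : 1 ≤ ℓ) (a : Fin (ℓ + 1) → ℝ) :
    (matA ℓ s a).det = 0 ↔ ∑ j : Fin (ℓ + 1), wv ℓ j * (((j : ℕ) : ℝ) ^ s * a j) = 0 := by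
  rw [matA_eq]
  have h := det_formula ℓ hℓ (fun j => ((j : ℕ) : ℝ) ^ s * a j)
  constructor
  · intro h0
    rw [h0, zero_mul] at h
    exact (mul_eq_zero.mp h.symm).resolve_right (detN_ne ℓ hℓ)
  · intro h0
    rw [h0, zero_mul] at h
    exact (mul_eq_zero.mp h).resolve_right (ne_of_gt (wv_norm_pos ℓ))

noncomputable def Fsum (ℓ s : ℕ) (Q : ℝ[X]) : ℝ :=
  ∑ j ∈ Finset.range (ℓ + 1),
    (-1 : ℝ) ^ j * (ℓ.choose j) * (((j : ℕ) : ℝ) ^ s * Q.eval ((j : ℕ) : ℝ))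

lemma Fsum_eq (ℓ m s : ℕ) (hm : m ≤ ℓ) (hs : s ≤ m) (Q : ℝ[X])
    (hQ : Q.degree = ((ℓ - m : ℕ) : WithBot ℕ)) :
    Fsum ℓ s Q = (-1 : ℝ) ^ ℓ * (ℓ.factorial : ℝ) * Q.coeff (ℓ - s) := by
  set P : ℝ[X] := X ^ s * Q with hP
  have heval : ∀ j : ℕ, ((j : ℕ) : ℝ) ^ s * Q.eval ((j : ℕ) : ℝ) = P.eval ((j : ℕ) : ℝ) := by
    intro j
    rw [hP, eval_mul, eval_pow, eval_X]
  have hdeg : P.degree ≤ (ℓ : ℕ) := by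
    rw [hP, degree_mul, degree_X_pow, hQ, ← Nat.cast_add]
    exact_mod_cast (by omega : s + (ℓ - m) ≤ ℓ)
  have hco : P.coeff ℓ = Q.coeff (ℓ - s) := by
    have h2 := Polynomial.coeff_X_pow_mul Q s (ℓ - s)
    rw [show ℓ - s + s = ℓ by omega] at h2
    rw [hP, h2]
  rw [Fsum, Finset.sum_congr rfl (fun j _ => by rw [heval j]), alt_sum ℓ P hdeg, hco]

lemma key_fwd (ℓ m : ℕ) (hm : m ≤ ℓ) (Q : ℝ[X])
    (hQ : Q.degree = ((ℓ - m : ℕ) : WithBot ℕ)) :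
    (∀ s < m, Fsum ℓ s Q = 0) ∧ Fsum ℓ m Q ≠ 0 := by
  have hQne : Q ≠ 0 := by
    intro h0
    rw [h0, degree_zero] at hQ
    exact (by simp : (⊥ : WithBot ℕ) ≠ ((ℓ - m : ℕ) : WithBot ℕ)) hQ
  have hnat : Q.natDegree = ℓ - m := natDegree_eq_of_degree_eq_some hQ
  constructor
  · intro s hs
    rw [Fsum_eq ℓ m s hm (le_of_lt hs) Q hQ]
    have : Q.coeff (ℓ - s) = 0 :=
      Polynomial.coeff_eq_zero_of_natDegree_lt (by omega)
    rw [this, mul_zero]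
  · rw [Fsum_eq ℓ m m hm le_rfl Q hQ, ← hnat, Polynomial.coeff_natDegree]
    refine mul_ne_zero (mul_ne_zero ?_ ?_) ?_
    · exact pow_ne_zero _ (by norm_num)
    · exact_mod_cast (Nat.factorial_pos ℓ).ne'
    · exact Polynomial.leadingCoeff_ne_zero.mpr hQne

theorem degree_interpolation_iff_det (ℓ : ℕ) (hℓ : 1 ≤ ℓ) (a : Fin (ℓ + 1) → ℝ)
    (ξ h : ℝ) (hh : h ≠ 0) (q : Polynomial ℝ) (hdeg : q.degree ≤ ℓ)
    (hq : ∀ i : Fin (ℓ + 1), q.eval (ξ + (i : ℕ) * h) = a i)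
    (m : ℕ) (hm : m ≤ ℓ) :
    q.degree = ((ℓ - m : ℕ) : WithBot ℕ) ↔
      (∀ s < m, (matA ℓ s a).det = 0) ∧ (matA ℓ m a).det ≠ 0 := by
  set Q : ℝ[X] := q.comp (C h * X + C ξ) with hQdef
  have hQdeg : Q.degree = q.degree := by
    by_cases hq0 : q = 0
    · rw [hQdef, hq0, Polynomial.zero_comp]
    · have hQne0 : Q ≠ 0 := by
        rw [hQdef, Ne, Polynomial.comp_eq_zero_iff]
        push_neg
        refine ⟨hq0, fun _ => ?_⟩
        intro hcon
        have := congrArg (fun p => Polynomial.coeff p 1) hcon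
        simp [coeff_C] at this
        exact hh this
      rw [Polynomial.degree_eq_natDegree hQne0, Polynomial.degree_eq_natDegree hq0,
        hQdef, Polynomial.natDegree_comp, Polynomial.natDegree_linear hh, mul_one]
  have haQ : ∀ j : Fin (ℓ + 1), a j = Q.eval (((j : ℕ) : ℕ) : ℝ) := by
    intro j
    rw [hQdef, eval_comp]
    simp only [eval_add, eval_mul, eval_C, eval_X]
    rw [show h * (((j : ℕ) : ℕ) : ℝ) + ξ = ξ + ((j : ℕ) : ℝ) * h by push_cast; ring]
    exact (hq j).symm
  have hFs : ∀ s : ℕ, (∑ j : Fin (ℓ + 1), wv ℓ j * (((j : ℕ) : ℝ) ^ s * a j)) = Fsum ℓ s Q := by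
    intro s
    have h1 : ∀ j : Fin (ℓ + 1), wv ℓ j * (((j : ℕ) : ℝ) ^ s * a j) =
        (fun n : ℕ => (-1 : ℝ) ^ n * (ℓ.choose n) *
          (((n : ℕ) : ℝ) ^ s * Q.eval ((n : ℕ) : ℝ))) (j : ℕ) := by
      intro j
      rw [haQ j]
      simp only [wv, mul_assoc]
    rw [Finset.sum_congr rfl (fun j _ => h1 j),
      Fin.sum_univ_eq_sum_range (fun n : ℕ => (-1 : ℝ) ^ n * (ℓ.choose n) *
        (((n : ℕ) : ℝ) ^ s * Q.eval ((n : ℕ) : ℝ))) (ℓ + 1), Fsum]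
  have hdetF : ∀ s : ℕ, (matA ℓ s a).det = 0 ↔ Fsum ℓ s Q = 0 := by
    intro s
    rw [det_matA_eq_zero_iff ℓ s hℓ a, hFs s]
  constructor
  · intro hdq
    have hQ : Q.degree = ((ℓ - m : ℕ) : WithBot ℕ) := by rw [hQdeg, hdq]
    obtain ⟨h1, h2⟩ := key_fwd ℓ m hm Q hQ
    exact ⟨fun s hs => (hdetF s).mpr (h1 s hs), fun h0 => h2 ((hdetF m).mp h0)⟩
  · rintro ⟨h1, h2⟩
    have hF2 : Fsum ℓ m Q ≠ 0 := fun h0 => h2 ((hdetF m).mpr h0)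
    have hQne : Q ≠ 0 := by
      intro h0
      apply hF2
      simp [Fsum, h0]
    have hdQ : Q.natDegree ≤ ℓ := by
      rw [← Polynomial.natDegree_le_iff_degree_le] at hdeg
      rw [Polynomial.natDegree_comp]
      have : (C h * X + C ξ).natDegree = 1 := Polynomial.natDegree_linear hh
      rw [this, mul_one]
      exact hdeg
    set m' : ℕ := ℓ - Q.natDegree with hm'
    have hQ' : Q.degree = ((ℓ - m' : ℕ) : WithBot ℕ) := by
      rw [Polynomial.degree_eq_natDegree hQne]
      congr 1
      omega
    obtain ⟨g1, g2⟩ := key_fwd ℓ m' (by omega) Q hQ'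
    have hmm : m' = m := by
      by_contra hne
      rcases Nat.lt_or_ge m' m with hlt | hge
      · exact g2 ((hdetF m').mp (h1 m' hlt))
      · have : m < m' := by omega
        exact hF2 (g1 m this)
    rw [← hQdeg, hQ', hmm]
end

section
/- Let ℓ ≥ 1, s ≥ 0 be integers and a = (a_0, …, a_ℓ) ∈ ℝ^{ℓ+1}. Let A_{s,a} be the (ℓ+1)×(ℓ+1) real matrix whose entry in row i and column j (1 ≤ i ≤ ℓ, 1 ≤ j ≤ ℓ+1) is ((i-1)(ℓ+1) + j)^{ℓ-1} and whose last row is (0^s·a_0, 1^s·a_1, …, ℓ^s·a_ℓ) (with 0^0 = 1). Then det(A_{s,a}) = σ_ℓ · ∑_{j=0}^{ℓ} (-1)^j · C(ℓ,j) · j^s · a_j, where σ_ℓ = (-1)^{ℓ(ℓ+1)/2} · (ℓ+1)^{ℓ(ℓ-1)/2} · ∏_{j=0}^{ℓ-1} C(ℓ-1,j) · ∏_{j=1}^{ℓ-1} (j!)^2. -/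
/-- The constant `σ_ℓ`. -/
noncomputable def sigma (ℓ : ℕ) : ℝ :=
  (-1 : ℝ) ^ (ℓ * (ℓ + 1) / 2) * ((ℓ + 1 : ℕ) : ℝ) ^ (ℓ * (ℓ - 1) / 2) *
    (∏ j ∈ Finset.range ℓ, ((ℓ - 1).choose j : ℝ)) *
      (∏ j ∈ Finset.Ico 1 ℓ, ((j.factorial : ℝ)) ^ 2)

open Finset Matrix

theorem neg_one_pow_eq_neg_one_pow_mul_neg_one_pow_sub {R : Type*} [Monoid R] [HasDistribNeg R]
    {j N : ℕ} (h : j ≤ N) : (-1 : R) ^ j = (-1) ^ N * (-1) ^ (N - j) := by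
  rw [← pow_add, show N + (N - j) = j + 2 * (N - j) by omega, pow_add, pow_mul, neg_one_sq,
    one_pow, mul_one]

theorem sum_range_neg_one_pow_mul_choose_mul_add_pow_eq_zero {R : Type*} [CommRing R] {k N : ℕ}
    (hk : k < N) (c : R) :
    ∑ j ∈ range (N + 1), (-1) ^ j * (N.choose j : R) * (c + j) ^ k = 0 := by
  have h := fwdDiff_iter_eq_sum_shift (1 : R) (fun r => r ^ k) N c
  rw [fwdDiff_iter_pow_eq_zero_of_lt hk] at h
  calc ∑ j ∈ range (N + 1), (-1) ^ j * (N.choose j : R) * (c + j) ^ k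
      = (-1) ^ N * ∑ j ∈ range (N + 1), ((-1 : ℤ) ^ (N - j) * N.choose j) • (c + j • 1) ^ k := by
        rw [mul_sum]
        refine sum_congr rfl fun j hj => ?_
        rw [neg_one_pow_eq_neg_one_pow_mul_neg_one_pow_sub (Nat.lt_succ_iff.mp (mem_range.mp hj))]
        simp only [zsmul_eq_mul, Int.cast_mul, Int.cast_pow, Int.cast_neg, Int.cast_one,
          Int.cast_natCast, nsmul_eq_mul, mul_one]
        ring
    _ = 0 := by rw [← h, Pi.zero_apply, mul_zero]

namespace Matrix

variable {R : Type*} [CommRing R] {n : ℕ}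

theorem det_updateCol_last_of_forall_castSucc_eq_zero (M : Matrix (Fin (n + 1)) (Fin (n + 1)) R)
    (v : Fin (n + 1) → R) (hv : ∀ i : Fin n, v i.castSucc = 0) :
    (M.updateCol (Fin.last n) v).det =
      v (Fin.last n) * (M.submatrix Fin.castSucc Fin.castSucc).det := by
  rw [det_succ_column _ (Fin.last n), Fin.sum_univ_castSucc]
  simp only [updateCol_self, hv, mul_zero, zero_mul, sum_const_zero, zero_add, Fin.val_last,
    ← two_mul, pow_mul, neg_one_sq, one_pow, one_mul, Fin.succAbove_last]
  congr 2
  ext i j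
  simp

theorem det_mul_eq_mulVec_last_mul_det_submatrix (M : Matrix (Fin (n + 1)) (Fin (n + 1)) R)
    (g : Fin (n + 1) → R) (hg : ∀ i : Fin n, (M *ᵥ g) i.castSucc = 0) :
    g (Fin.last n) * M.det =
      (M *ᵥ g) (Fin.last n) * (M.submatrix Fin.castSucc Fin.castSucc).det := by
  rw [← det_updateCol_last_of_forall_castSucc_eq_zero M _ hg, ← smul_eq_mul, ← det_updateCol_sum]
  congr 2
  ext k
  simp [mulVec, dotProduct, mul_comm]

theorem det_vandermonde_const_mul (c : R) (v : Fin n → R) :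
    (vandermonde fun i => c * v i).det = c ^ (n * (n - 1) / 2) * (vandermonde v).det := by
  have : (vandermonde fun i => c * v i) =
      vandermonde v * diagonal fun j : Fin n => c ^ (j : ℕ) := by
    ext i j
    simp [vandermonde_apply, mul_pow, mul_comm]
  rw [this, det_mul, det_diagonal, Fin.prod_univ_eq_prod_range (fun j => c ^ j),
    prod_pow_eq_pow_sum, sum_range_id, mul_comm]

theorem det_of_add_pow (x y : Fin (n + 1) → R) :
    (of fun i j => (x i + y j) ^ n).det =
      (∏ k : Fin (n + 1), (n.choose k : R)) * (vandermonde x).det *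
        (vandermonde fun j => -y j).det := by
  -- `projVandermonde 1 y` is the Vandermonde matrix of `y` with its columns reversed, and its
  -- determinant `∏ (y i - y j)` carries the sign of that reversal.
  have : (of fun i j => (x i + y j) ^ n) =
      vandermonde x * diagonal (fun k : Fin (n + 1) => (n.choose k : R)) *
        (projVandermonde (fun _ => 1) y)ᵀ := by
    ext i j
    rw [of_apply, add_pow, ← Fin.sum_univ_eq_sum_range (fun k => x i ^ k * y j ^ (n - k) * _)]
    simp only [mul_apply (M := _ * _), mul_diagonal, vandermonde_apply, transpose_apply,
      projVandermonde_apply, one_pow, one_mul, Fin.val_rev]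
    refine sum_congr rfl fun k _ => ?_
    rw [show n + 1 - (k + 1) = n - k by omega]
    ring
  rw [this, det_mul, det_mul, det_diagonal, det_transpose, det_projVandermonde, det_vandermonde,
    det_vandermonde]
  simp only [one_mul, neg_sub_neg]
  ring

end Matrix

def altChoose (n : ℕ) : Fin (n + 1) → ℝ := fun j => (-1) ^ (j : ℕ) * (n.choose j : ℝ)

theorem matA_mulVec_altChoose_castSucc (m s : ℕ) (a : Fin (m + 2) → ℝ) (i : Fin (m + 1)) :
    (matA (m + 1) s a *ᵥ altChoose (m + 1)) i.castSucc = 0 := by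
  have hrow (j : Fin (m + 2)) : matA (m + 1) s a i.castSucc j =
      (((i * (m + 2) + 1 : ℕ) : ℝ) + (j : ℕ)) ^ m := by
    simp only [matA, Fin.val_castSucc, i.isLt, if_true, Nat.add_sub_cancel]
    push_cast
    ring
  simp only [mulVec, dotProduct, hrow, altChoose]
  rw [← sum_range_neg_one_pow_mul_choose_mul_add_pow_eq_zero (Nat.lt_succ_self m)
    ((i * (m + 2) + 1 : ℕ) : ℝ), ← Fin.sum_univ_eq_sum_range (fun j => (-1) ^ j * _ * _)]
  exact sum_congr rfl fun j _ => mul_comm _ _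

theorem matA_mulVec_altChoose_last (ℓ s : ℕ) (a : Fin (ℓ + 1) → ℝ) :
    (matA ℓ s a *ᵥ altChoose ℓ) (Fin.last ℓ) =
      ∑ j : Fin (ℓ + 1), (-1) ^ (j : ℕ) * (ℓ.choose j : ℝ) * ((j : ℕ) : ℝ) ^ s * a j := by
  simp only [mulVec, dotProduct, matA, altChoose, Fin.val_last, lt_irrefl, if_false]
  exact sum_congr rfl fun j _ => by ring

theorem det_matA_submatrix_castSucc (m s : ℕ) (a : Fin (m + 2) → ℝ) :
    ((matA (m + 1) s a).submatrix Fin.castSucc Fin.castSucc).det =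
      (∏ k ∈ range (m + 1), (m.choose k : ℝ)) * (m + 2 : ℝ) ^ ((m + 1) * m / 2) *
        (-1) ^ ((m + 1) * m / 2) * (m.superFactorial : ℝ) ^ 2 := by
  have hB : (matA (m + 1) s a).submatrix Fin.castSucc Fin.castSucc =
      of fun i j : Fin (m + 1) => ((m + 2 : ℝ) * i + ((j : ℝ) + 1)) ^ m := by
    ext i j
    simp only [submatrix_apply, matA, Fin.val_castSucc, i.isLt, if_true, Nat.add_sub_cancel,
      of_apply]
    push_cast
    ring
  have hy : (vandermonde fun j : Fin (m + 1) => -(((j : ℕ) : ℝ) + 1)).det =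
      (-1) ^ ((m + 1) * m / 2) * m.superFactorial := by
    rw [show (fun j : Fin (m + 1) => -(((j : ℕ) : ℝ) + 1)) =
        fun j : Fin (m + 1) => -1 * ((j : ℕ) : ℝ) - 1 from funext fun j => by ring,
      det_vandermonde_sub, det_vandermonde_const_mul,
      det_vandermonde_id_eq_superFactorial, Nat.add_sub_cancel]
  rw [hB, det_of_add_pow, det_vandermonde_const_mul, det_vandermonde_id_eq_superFactorial, hy,
    Fin.prod_univ_eq_prod_range (fun k => (m.choose k : ℝ)), Nat.add_sub_cancel]
  ring

theorem sigma_succ (m : ℕ) :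
    sigma (m + 1) = (-1) ^ (m + 1) * ((∏ k ∈ range (m + 1), (m.choose k : ℝ)) *
      (m + 2 : ℝ) ^ ((m + 1) * m / 2) * (-1) ^ ((m + 1) * m / 2) * (m.superFactorial : ℝ) ^ 2) := by
  have hsign : (m + 1) * (m + 1 + 1) / 2 = (m + 1) * m / 2 + (m + 1) := by
    rw [show (m + 1) * (m + 1 + 1) = (m + 1) * m + 2 * (m + 1) by ring]
    omega
  have hfact : ∏ j ∈ Ico 1 (m + 1), (j.factorial : ℝ) ^ 2 = (m.superFactorial : ℝ) ^ 2 := by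
    rw [prod_pow, Ico_add_one_right_eq_Icc, ← Nat.prod_Icc_factorial, Nat.cast_prod]
  rw [sigma, hsign, hfact, Nat.add_sub_cancel, pow_add]
  push_cast
  ring

theorem det_matA_general (ℓ : ℕ) (s : ℕ) (a : Fin (ℓ + 1) → ℝ) :
    (matA ℓ s a).det =
      sigma ℓ * ∑ j : Fin (ℓ + 1),
        (-1 : ℝ) ^ (j : ℕ) * (ℓ.choose (j : ℕ) : ℝ) * ((j : ℕ) : ℝ) ^ s * a j := by
  rcases ℓ with _ | m
  · simp [matA, sigma]
  have key := det_mul_eq_mulVec_last_mul_det_submatrix (matA (m + 1) s a) (altChoose (m + 1))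
    (matA_mulVec_altChoose_castSucc m s a)
  have hsq : ((-1 : ℝ) ^ (m + 1)) ^ 2 = 1 := by rw [← pow_mul, pow_mul', neg_one_sq, one_pow]
  rw [matA_mulVec_altChoose_last, det_matA_submatrix_castSucc, altChoose, Fin.val_last,
    Nat.choose_self, Nat.cast_one, mul_one] at key
  rw [sigma_succ]
  linear_combination (-1 : ℝ) ^ (m + 1) * key - (matA (m + 1) s a).det * hsq

theorem det_matA (ℓ : ℕ) (hℓ : 1 ≤ ℓ) (s : ℕ) (a : Fin (ℓ + 1) → ℝ) :
    (matA ℓ s a).det =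
      sigma ℓ * ∑ j : Fin (ℓ + 1),
        (-1 : ℝ) ^ (j : ℕ) * (ℓ.choose (j : ℕ) : ℝ) * ((j : ℕ) : ℝ) ^ s * a j :=
  det_matA_general ℓ s a
end

section
/- Let ℓ ≥ 1 be an integer, a = (a_0, …, a_ℓ) ∈ ℝ^{ℓ+1}, ξ ∈ ℝ, h ≠ 0, and let q_a be the unique polynomial of degree at most ℓ with q_a(ξ + i·h) = a_i for i = 0, …, ℓ. Then for every integer s with 0 ≤ s ≤ ℓ, the (ℓ-s)-th derivative of q_a at ξ satisfies q_a^{(ℓ-s)}(ξ) = h^{s-ℓ} · ∑_{k=0}^{s} σ_{ℓ,s,k} · (∑_{j=0}^{ℓ} (-1)^j · C(ℓ,j) · j^k · a_j), where σ_{ℓ,s,k} = (-1)^{ℓ-s+k} · ((ℓ-s)!/ℓ!) · τ_{ℓ,s-k,0} and τ_{ℓ,m,0} = ∑_{1 ≤ i_1 < … < i_m ≤ ℓ} i_1⋯i_m is the m-th elementary symmetric polynomial in 1, 2, …, ℓ (with τ_{ℓ,0,0} = 1). -/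
/-- `τ_{ℓ,m,0}`: the `m`-th elementary symmetric polynomial in `1, 2, …, ℓ`
(with `τ_{ℓ,0,0} = 1`). -/
def tau (ℓ m : ℕ) : ℝ :=
  ∑ S ∈ (Finset.Icc 1 ℓ).powersetCard m, ∏ i ∈ S, (i : ℝ)

/-!
Rescaling `p(x) = q(ξ + h x)` moves the nodes to `0, 1, …, ℓ` and turns `q^{(m)}(ξ)` into
`m! h^{-m}` times the `m`-th coefficient of `p`. That coefficient is read off the Lagrange form
of `p`: the nodal weight at the node `r` is `(-1)^{ℓ-r} C(ℓ,r) / ℓ!`, and the coefficients of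
`∏_{i ≠ r} (X - i) = W / (X - r)`, where `W = ∏_{i=0}^{ℓ} (X - i)`, follow by synthetic division
from those of `W`, which by Vieta's formulas are `(-1)^m τ_{ℓ,m,0}`.
-/

open Polynomial Finset Lagrange
open scoped Nat

theorem neg_one_pow_sub_eq_pow_add {M : Type*} [Monoid M] [HasDistribNeg M] {m n : ℕ}
    (h : n ≤ m) : (-1 : M) ^ (m - n) = (-1) ^ (m + n) := by
  obtain ⟨c, rfl⟩ := Nat.exists_eq_add_of_le h
  rw [Nat.add_sub_cancel_left, add_right_comm, ← two_mul, pow_add, pow_mul, neg_one_sq, one_pow,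
    one_mul]

theorem prod_erase_range_natCast_sub {R : Type*} [CommRing R] {n r : ℕ} (hr : r ≤ n) :
    ∏ i ∈ (range (n + 1)).erase r, ((r : R) - i) = (-1) ^ (n - r) * r ! * (n - r)! := by
  induction n, hr using Nat.le_induction with
  | base =>
    rw [range_add_one, erase_insert notMem_range_self, ← Nat.descFactorial_self,
      Nat.descFactorial_eq_prod_range, Nat.cast_prod, Nat.sub_self]
    simp only [pow_zero, one_mul, Nat.factorial_zero, Nat.cast_one, mul_one]
    exact prod_congr rfl fun i hi => (Nat.cast_sub (mem_range.1 hi).le).symm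
  | succ n hrn ih =>
    rw [range_add_one, erase_insert_of_ne (by omega), prod_insert (by simp), ih,
      Nat.sub_add_comm hrn, Nat.factorial_succ]
    push_cast [Nat.cast_sub hrn]
    ring

theorem nodalWeight_range_natCast {F : Type*} [Field F] [CharZero F] {n r : ℕ} (hr : r ≤ n) :
    nodalWeight (range (n + 1)) (Nat.cast : ℕ → F) r = (-1) ^ (n - r) * n.choose r / n ! := by
  rw [nodalWeight, prod_inv_distrib, prod_erase_range_natCast_sub hr,
    ← Nat.choose_mul_factorial_mul_factorial hr]
  have hchoose : (n.choose r : F) ≠ 0 := Nat.cast_ne_zero.2 (Nat.choose_pos hr).ne'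
  push_cast
  field_simp
  rw [← pow_mul', pow_mul, neg_one_sq, one_pow]

theorem coeff_divByMonic_X_sub_C_of_natDegree_eq {R : Type*} [CommRing R] {p : R[X]} {n s : ℕ}
    (hp : p.natDegree = n + 1) (hs : s ≤ n) (a : R) :
    (p /ₘ (X - C a)).coeff (n - s) = ∑ k ∈ range (s + 1), a ^ k * p.coeff (n - s + 1 + k) := by
  rw [coeff_divByMonic_X_sub_C, hp, ← Ico_add_one_right_eq_Icc, sum_Ico_eq_sum_range,
    show n + 1 + 1 - (n - s + 1) = s + 1 by omega]
  simp only [Nat.add_sub_cancel_left]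

theorem tau_eq_sum_powersetCard_range (ℓ m : ℕ) :
    tau ℓ m = ∑ t ∈ (range (ℓ + 1)).powersetCard m, ∏ i ∈ t, (i : ℝ) := by
  refine sum_subset (powersetCard_mono fun i hi => ?_) fun t ht hnot =>
    prod_eq_zero (i := 0) ?_ Nat.cast_zero
  · simp only [mem_Icc, mem_range] at hi ⊢
    omega
  · simp only [mem_powersetCard, (mem_powersetCard.1 ht).2, and_true, not_subset] at ht hnot
    obtain ⟨i, hit, hi⟩ := hnot
    have := mem_range.1 (ht hit)
    simp only [mem_Icc] at hi
    obtain rfl : i = 0 := by omega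
    exact hit

theorem coeff_nodal_range_natCast (ℓ : ℕ) {m : ℕ} (hm : m ≤ ℓ + 1) :
    (nodal (range (ℓ + 1)) (Nat.cast : ℕ → ℝ)).coeff (ℓ + 1 - m) = (-1) ^ m * tau ℓ m := by
  have hcard : Multiset.card ((range (ℓ + 1)).val.map (Nat.cast : ℕ → ℝ)) = ℓ + 1 := by simp
  have hmap : (range (ℓ + 1)).val.map (fun i : ℕ => X - C (i : ℝ)) =
      ((range (ℓ + 1)).val.map Nat.cast).map (fun t : ℝ => X - C t) := by
    rw [Multiset.map_map]; rfl
  rw [nodal_eq, Finset.prod, hmap, Multiset.prod_X_sub_C_coeff _ (by omega), hcard, Nat.sub_sub_self hm, Finset.esymm_map_val,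
    tau_eq_sum_powersetCard_range]

theorem coeff_nodal_erase_range_natCast {ℓ r s : ℕ} (hr : r ≤ ℓ) (hs : s ≤ ℓ) :
    (nodal ((range (ℓ + 1)).erase r) (Nat.cast : ℕ → ℝ)).coeff (ℓ - s) =
      ∑ k ∈ range (s + 1), (r : ℝ) ^ k * ((-1) ^ (s - k) * tau ℓ (s - k)) := by
  have hdiv : nodal ((range (ℓ + 1)).erase r) (Nat.cast : ℕ → ℝ) =
      nodal (range (ℓ + 1)) Nat.cast /ₘ (X - C (r : ℝ)) := by
    rw [nodal_eq_mul_nodal_erase (mem_range.2 (Nat.lt_succ_of_le hr)),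
      mul_divByMonic_cancel_left _ (monic_X_sub_C _)]
  rw [hdiv, coeff_divByMonic_X_sub_C_of_natDegree_eq (by rw [natDegree_nodal, card_range]) hs]
  refine sum_congr rfl fun k hk => ?_
  have hk : k ≤ s := Nat.le_of_lt_succ (mem_range.1 hk)
  rw [← coeff_nodal_range_natCast ℓ (by omega)]
  congr 2
  omega

theorem coeff_eq_sum_nodalWeight_mul {F ι : Type*} [Field F] [DecidableEq ι] {s : Finset ι}
    {v : ι → F} (hvs : Set.InjOn v s) {p : F[X]} (hp : p.degree < #s) (m : ℕ) :
    p.coeff m = ∑ i ∈ s, nodalWeight s v i * (nodal (s.erase i) v).coeff m * p.eval (v i) := by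
  conv_lhs => rw [eq_interpolate hvs hp, interpolate_apply]
  rw [finsetSum_coeff]
  refine sum_congr rfl fun i hi => ?_
  rw [basis_eq_prod_sub_inv_mul_nodal_div hi, ← nodal_erase_eq_nodal_div hi, coeff_C_mul,
    coeff_C_mul]
  ring

theorem factorial_mul_coeff_taylor_comp_C_mul_X {R : Type*} [CommSemiring R] (q : R[X])
    (ξ h : R) (m : ℕ) :
    m ! * ((taylor ξ q).comp (C h * X)).coeff m = (derivative^[m] q).eval ξ * h ^ m := by
  rw [comp_C_mul_X_coeff, taylor_coeff, ← factorial_smul_hasseDeriv, LinearMap.smul_apply,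
    eval_smul, nsmul_eq_mul, mul_assoc]

theorem factorial_mul_coeff_eq_sum_eval_natCast {ℓ s : ℕ} (hs : s ≤ ℓ) {p : ℝ[X]}
    (hp : p.degree ≤ ℓ) :
    ((ℓ - s)! : ℝ) * p.coeff (ℓ - s) =
      ∑ k ∈ range (s + 1),
        ((-1 : ℝ) ^ (ℓ - s + k) * ((ℓ - s)! : ℝ) / (ℓ ! : ℝ) * tau ℓ (s - k)) *
          ∑ j ∈ range (ℓ + 1), (-1 : ℝ) ^ j * (ℓ.choose j : ℝ) * (j : ℝ) ^ k * p.eval (j : ℝ) := by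
  have hdeg : p.degree < #(range (ℓ + 1)) := by
    rw [card_range]
    exact hp.trans_lt (by exact_mod_cast ℓ.lt_succ_self)
  rw [coeff_eq_sum_nodalWeight_mul Nat.cast_injective.injOn hdeg, mul_sum]
  simp_rw [mul_sum]
  rw [sum_comm]
  refine sum_congr rfl fun r hr => ?_
  have hr : r ≤ ℓ := Nat.le_of_lt_succ (mem_range.1 hr)
  rw [nodalWeight_range_natCast hr, coeff_nodal_erase_range_natCast hr hs, mul_sum, sum_mul,
    mul_sum]
  refine sum_congr rfl fun k hk => ?_
  have hk : k ≤ s := Nat.le_of_lt_succ (mem_range.1 hk)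
  rw [neg_one_pow_sub_eq_pow_add hr, neg_one_pow_sub_eq_pow_add hk, pow_add _ (ℓ - s),
    neg_one_pow_sub_eq_pow_add hs]
  ring

theorem deriv_interpolation_general (ℓ : ℕ) (a : Fin (ℓ + 1) → ℝ)
    (ξ h : ℝ) (hh : h ≠ 0) (q : Polynomial ℝ) (hdeg : q.degree ≤ ℓ)
    (hq : ∀ i : Fin (ℓ + 1), q.eval (ξ + (i : ℕ) * h) = a i)
    (s : ℕ) (hs : s ≤ ℓ) :
    (Polynomial.derivative^[ℓ - s] q).eval ξ =
      h ^ ((s : ℤ) - (ℓ : ℤ)) *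
        ∑ k ∈ Finset.range (s + 1),
          ((-1 : ℝ) ^ (ℓ - s + k) * ((ℓ - s).factorial : ℝ) / (ℓ.factorial : ℝ) *
              tau ℓ (s - k)) *
            ∑ j : Fin (ℓ + 1),
              (-1 : ℝ) ^ (j : ℕ) * (ℓ.choose (j : ℕ) : ℝ) * ((j : ℕ) : ℝ) ^ k * a j := by
  set p := (taylor ξ q).comp (C h * X)
  have hp : p.degree ≤ ℓ := by
    rw [← natDegree_le_iff_degree_le] at hdeg ⊢
    rwa [natDegree_comp, natDegree_taylor, natDegree_C_mul_X _ hh, mul_one]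
  have hvals (j : Fin (ℓ + 1)) : p.eval ((j : ℕ) : ℝ) = a j := by
    rw [eval_comp, taylor_eval, ← hq j]
    rw [eval_mul, eval_C, eval_X, add_comm, mul_comm]
  have hsum := factorial_mul_coeff_eq_sum_eval_natCast hs hp
  rw [factorial_mul_coeff_taylor_comp_C_mul_X] at hsum
  simp only [← Fin.sum_univ_eq_sum_range, hvals] at hsum ⊢
  rw [← hsum, show (s : ℤ) - ℓ = -((ℓ - s : ℕ) : ℤ) by omega, zpow_neg, zpow_natCast]
  field_simp

theorem deriv_interpolation (ℓ : ℕ) (hℓ : 1 ≤ ℓ) (a : Fin (ℓ + 1) → ℝ)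
    (ξ h : ℝ) (hh : h ≠ 0) (q : Polynomial ℝ) (hdeg : q.degree ≤ ℓ)
    (hq : ∀ i : Fin (ℓ + 1), q.eval (ξ + (i : ℕ) * h) = a i)
    (s : ℕ) (hs : s ≤ ℓ) :
    (Polynomial.derivative^[ℓ - s] q).eval ξ =
      h ^ ((s : ℤ) - (ℓ : ℤ)) *
        ∑ k ∈ Finset.range (s + 1),
          ((-1 : ℝ) ^ (ℓ - s + k) * ((ℓ - s).factorial : ℝ) / (ℓ.factorial : ℝ) *
              tau ℓ (s - k)) *
            ∑ j : Fin (ℓ + 1),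
              (-1 : ℝ) ^ (j : ℕ) * (ℓ.choose (j : ℕ) : ℝ) * ((j : ℕ) : ℝ) ^ k * a j :=
  deriv_interpolation_general ℓ a ξ h hh q hdeg hq s hs
end

section
/- Let ℓ ≥ 1 and k ≥ 1 be integers, let α = (α_1, …, α_k), β = (β_1, …, β_k) be complex numbers with β_i ≠ 0 and α_i/β_i a positive real number for each i, and α_i·β_j - β_i·α_j ≠ 0 for all 1 ≤ i < j ≤ k, and let r = (r_1, …, r_k) be positive real numbers that are pairwise distinct. Define the k×k complex matrix B by B_{ij} = (α_i + r_j·β_i)^{ℓ-1}. Then B is invertible if and only if k ≤ ℓ. -/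
/-!
The binomial expansion of `(α i + r j β i) ^ (ℓ - 1)` factors the matrix through `ℂ ^ ℓ`, so it
has rank at most `ℓ`. Conversely, writing `α i = t i β i` with distinct `t i > 0`, the matrix is
`diag (β i ^ n)` times the real matrix `((t i + r j) ^ n)`, `n = ℓ - 1`. The functions
`(x + r j) ^ n`, `j < k ≤ n + 1`, form a Chebyshev system on `x > -min r`: if
`p x = ∑ c j (x + r j) ^ n` has `k` zeros there, Rolle's theorem applied to `p x / (x + r 0) ^ n`,
whose derivative is `n ∑ c j (r 0 - r j) (x + r j) ^ (n - 1) / (x + r 0) ^ (n + 1)`, gives `k - 1`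
interlacing zeros of a combination of the `k - 1` functions `(x + r j) ^ (n - 1)`, `j ≠ 0`.
-/

open Set Finset

theorem hasDerivAt_add_pow_div_add_pow (a b : ℝ) (m : ℕ) {x : ℝ} (hx : x + b ≠ 0) :
    HasDerivAt (fun y => (y + a) ^ (m + 1) / (y + b) ^ (m + 1))
      ((m + 1) * (b - a) * (x + a) ^ m / (x + b) ^ (m + 2)) x := by
  have hpow (c : ℝ) : HasDerivAt (fun y => (y + c) ^ (m + 1)) ((m + 1) * (x + c) ^ m) x := by
    simpa using ((hasDerivAt_id x).add_const c).fun_pow (m + 1)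
  refine ((hpow a).fun_div (hpow b) (pow_ne_zero _ hx)).congr_deriv ?_
  field_simp
  ring

theorem exists_sum_mul_sub_mul_add_pow_eq_zero {ι : Type*} [Fintype ι] (c r : ι → ℝ) (ρ : ℝ)
    (m : ℕ) {a b : ℝ} (hab : a < b) (ha : 0 < a + ρ)
    (hpa : ∑ j, c j * (a + r j) ^ (m + 1) = 0) (hpb : ∑ j, c j * (b + r j) ^ (m + 1) = 0) :
    ∃ s ∈ Ioo a b, ∑ j, c j * (ρ - r j) * (s + r j) ^ m = 0 := by
  set q : ℝ → ℝ := fun x => ∑ j, c j * ((x + r j) ^ (m + 1) / (x + ρ) ^ (m + 1))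
  have hq : ∀ x ∈ Icc a b, HasDerivAt q
      ((m + 1) / (x + ρ) ^ (m + 2) * ∑ j, c j * (ρ - r j) * (x + r j) ^ m) x := by
    intro x hx
    have hxρ : x + ρ ≠ 0 := by linarith [hx.1]
    rw [Finset.mul_sum]
    refine HasDerivAt.fun_sum fun j _ => ?_
    refine ((hasDerivAt_add_pow_div_add_pow (r j) ρ m hxρ).const_mul (c j)).congr_deriv ?_
    field_simp
  have hq_eq (x : ℝ) : q x = (∑ j, c j * (x + r j) ^ (m + 1)) / (x + ρ) ^ (m + 1) := by
    simp only [q, Finset.sum_div, mul_div_assoc]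
  obtain ⟨s, hs, hs0⟩ := exists_hasDerivAt_eq_zero hab
    (continuousOn_of_forall_continuousAt fun x hx => (hq x hx).continuousAt)
    (by rw [hq_eq, hq_eq, hpa, hpb, zero_div, zero_div]) fun x hx => hq x (Ioo_subset_Icc_self hx)
  refine ⟨s, hs, (mul_eq_zero.mp hs0).resolve_left ?_⟩
  have : 0 < s + ρ := by linarith [hs.1]
  positivity

theorem eq_zero_of_sum_mul_add_pow_eq_zero {k n : ℕ} (hkn : k ≤ n + 1) {r : Fin k → ℝ}
    (hr : Function.Injective r) {t : Fin k → ℝ} (ht : StrictMono t) (htr : ∀ i j, 0 < t i + r j)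
    {c : Fin k → ℝ} (hc : ∀ i, ∑ j, c j * (t i + r j) ^ n = 0) : c = 0 := by
  induction k generalizing n with
  | zero => exact Subsingleton.elim _ _
  | succ k ih =>
    have hc_succ : ∀ j : Fin k, c j.succ = 0 := by
      obtain _ | m := n
      · exact fun j => absurd j.pos (by omega)
      have hzero (i : Fin k) : ∃ s ∈ Ioo (t i.castSucc) (t i.succ),
          ∑ j : Fin k, c j.succ * (r 0 - r j.succ) * (s + r j.succ) ^ m = 0 := by
        obtain ⟨s, hs, hs0⟩ := exists_sum_mul_sub_mul_add_pow_eq_zero c r (r 0) m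
          (ht Fin.castSucc_lt_succ) (htr _ 0) (hc _) (hc _)
        exact ⟨s, hs, by simpa [Fin.sum_univ_succ] using hs0⟩
      choose s hs hs0 using hzero
      have hs_mono : StrictMono s := fun i i' hii' => calc
        s i < t i.succ := (hs i).2
        _ ≤ t i'.castSucc := ht.monotone (Fin.succ_le_castSucc_iff.mpr hii')
        _ < s i' := (hs i').1
      have hsr (i j : Fin k) : 0 < s i + r j.succ := by
        linarith [(hs i).1, htr i.castSucc j.succ]
      have h := ih (by omega) (hr.comp (Fin.succ_injective _)) hs_mono hsr hs0
      intro j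
      have hr0 : r 0 - r j.succ ≠ 0 := sub_ne_zero.mpr (hr.ne (Fin.succ_ne_zero j).symm)
      exact (mul_eq_zero.mp (congrFun h j)).resolve_right hr0
    have hc_zero : c 0 = 0 := by
      have h0 := hc 0
      simp only [Fin.sum_univ_succ, hc_succ, zero_mul, Finset.sum_const_zero, add_zero] at h0
      exact (mul_eq_zero.mp h0).resolve_right (pow_pos (htr 0 0) n).ne'
    funext i
    exact Fin.cases hc_zero hc_succ i

theorem det_of_add_pow_ne_zero {k n : ℕ} (hkn : k ≤ n + 1) {r t : Fin k → ℝ}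
    (hr : Function.Injective r) (ht : Function.Injective t) (htr : ∀ i j, 0 < t i + r j) :
    (Matrix.of fun i j => (t i + r j) ^ n).det ≠ 0 := by
  intro h
  obtain ⟨c, hc_ne, hc⟩ := Matrix.exists_mulVec_eq_zero_iff.mpr h
  set σ := Tuple.sort t
  have hσ : StrictMono (t ∘ σ) :=
    (Tuple.monotone_sort t).strictMono_of_injective (ht.comp σ.injective)
  refine hc_ne (eq_zero_of_sum_mul_add_pow_eq_zero hkn hr hσ (fun i j => htr _ j) fun i => ?_)
  simpa [Matrix.mulVec, dotProduct, mul_comm] using congrFun hc (σ i)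

theorem Matrix.of_add_mul_pow_eq_mul {R m p : Type*} [CommSemiring R] (a b : m → R) (x : p → R)
    (n : ℕ) : (Matrix.of fun i j => (a i + x j * b i) ^ n) =
      (Matrix.of fun i (l : Fin (n + 1)) => (n.choose l : R) * b i ^ (l : ℕ) * a i ^ (n - l)) *
        Matrix.of fun (l : Fin (n + 1)) j => x j ^ (l : ℕ) := by
  ext i j
  rw [Matrix.of_apply, add_comm, add_pow, ← Fin.sum_univ_eq_sum_range]
  simp only [Matrix.mul_apply, Matrix.of_apply]
  exact Finset.sum_congr rfl fun l _ => by ring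

theorem Matrix.rank_of_add_mul_pow_le {R m p : Type*} [CommRing R] [StrongRankCondition R]
    [Fintype p] (a b : m → R) (x : p → R) (n : ℕ) :
    (Matrix.of fun i j => (a i + x j * b i) ^ n).rank ≤ n + 1 := by
  rw [Matrix.of_add_mul_pow_eq_mul]
  exact (Matrix.rank_mul_le_left _ _).trans ((Matrix.rank_le_card_width _).trans (by simp))

theorem matB_invertible_iff_general (ℓ k : ℕ) (hℓ : 1 ≤ ℓ)
    (α β : Fin k → ℂ) (hβ : ∀ i, β i ≠ 0)
    (hpos : ∀ i, ∃ t : ℝ, 0 < t ∧ α i / β i = (t : ℂ))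
    (hαβ : ∀ i j : Fin k, i < j → α i * β j - β i * α j ≠ 0)
    (r : Fin k → ℝ) (hr : ∀ i, 0 < r i) (hinj : Function.Injective r) :
    IsUnit (Matrix.of fun i j : Fin k => (α i + (r j : ℂ) * β i) ^ (ℓ - 1)) ↔ k ≤ ℓ := by
  constructor
  · intro hB
    have := Matrix.rank_of_add_mul_pow_le α β (fun j => (r j : ℂ)) (ℓ - 1)
    rw [Matrix.rank_of_isUnit _ hB, Fintype.card_fin] at this
    omega
  · intro hkℓ
    choose t ht hαt using hpos
    have hα (i : Fin k) : α i = β i * t i := by rw [← hαt i, mul_div_cancel₀ _ (hβ i)]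
    have ht_inj : Function.Injective t := by
      intro i j hij
      by_contra hne
      rcases lt_or_gt_of_ne hne with h | h
      · exact hαβ i j h (by rw [hα, hα, hij]; ring)
      · exact hαβ j i h (by rw [hα, hα, hij]; ring)
    set M : Matrix (Fin k) (Fin k) ℝ := Matrix.of fun i j => (t i + r j) ^ (ℓ - 1)
    have hM : IsUnit M := (Matrix.isUnit_iff_isUnit_det M).mpr <| isUnit_iff_ne_zero.mpr <|
      det_of_add_pow_ne_zero (by omega) hinj ht_inj fun i j => add_pos (ht i) (hr j)
    have hB : (Matrix.of fun i j : Fin k => (α i + (r j : ℂ) * β i) ^ (ℓ - 1)) =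
        Matrix.diagonal (fun i => β i ^ (ℓ - 1)) * Complex.ofRealHom.mapMatrix M := by
      ext i j
      simp only [hα, Matrix.of_apply, RingHom.mapMatrix_apply, Matrix.diagonal_mul, Matrix.map_apply,
        Complex.ofRealHom_eq_coe, Complex.ofReal_pow, Complex.ofReal_add, ← mul_pow, M]
      ring
    rw [hB]
    refine IsUnit.mul ?_ (hM.map _)
    rw [Matrix.isUnit_diagonal, Pi.isUnit_iff]
    exact fun i => (hβ i).isUnit.pow _

theorem matB_invertible_iff (ℓ k : ℕ) (hℓ : 1 ≤ ℓ) (hk : 1 ≤ k)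
    (α β : Fin k → ℂ) (hβ : ∀ i, β i ≠ 0)
    (hpos : ∀ i, ∃ t : ℝ, 0 < t ∧ α i / β i = (t : ℂ))
    (hαβ : ∀ i j : Fin k, i < j → α i * β j - β i * α j ≠ 0)
    (r : Fin k → ℝ) (hr : ∀ i, 0 < r i) (hinj : Function.Injective r) :
    IsUnit (Matrix.of fun i j : Fin k => (α i + (r j : ℂ) * β i) ^ (ℓ - 1)) ↔ k ≤ ℓ :=
  matB_invertible_iff_general ℓ k hℓ α β hβ hpos hαβ r hr hinj
end

section
/- Let ℓ ≥ 1 and 1 ≤ k ≤ ℓ be integers, let α = (α_1, …, α_k), β = (β_1, …, β_k) be nonzero complex numbers with ρ_i = β_i/α_i, and let r = (r_1, …, r_k) be pairwise distinct complex numbers. Define the k×k complex matrix B by B_{ij} = (α_i + r_j·β_i)^{ℓ-1}. Then det(B) = ∏_{i=1}^{k} α_i^{ℓ-1} · ∑_{0 ≤ μ_1 < … < μ_k ≤ ℓ-1} (∏_{j=1}^{k} C(ℓ-1, μ_j)) · V_{k,μ}(r_1, …, r_k) · V_{k,μ}(ρ_1, …, ρ_k), where the sum runs over all strictly increasing sequences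 μ = (μ_1, …, μ_k) with 0 ≤ μ_1 < … < μ_k ≤ ℓ-1. -/
open scoped Classical

/-- The generalized Vandermonde determinant `V_{k,μ}(ν) = det(ν_i^{μ_j})`. -/
noncomputable def genVandermonde (k : ℕ) (μ : Fin k → ℕ) (ν : Fin k → ℂ) : ℂ :=
  (Matrix.of fun i j : Fin k => ν i ^ μ j).det

section CauchyBinet

open Finset Equiv Matrix

theorem cauchyBinet {k ℓ : ℕ} (X : Matrix (Fin k) (Fin ℓ) ℂ) (Y : Matrix (Fin ℓ) (Fin k) ℂ) :
    (X * Y).det = ∑ μ ∈ Finset.univ.filter (fun μ : Fin k → Fin ℓ => StrictMono μ),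
      (X.submatrix id μ).det * (Y.submatrix μ id).det := by
  classical
  have step1 : (X * Y).det =
      ∑ p : Fin k → Fin ℓ, (X.submatrix id p).det * ∏ i, Y (p i) i := by
    rw [det_apply']
    simp only [mul_apply, Finset.prod_univ_sum, Fintype.piFinset_univ, Finset.mul_sum]
    rw [Finset.sum_comm]
    refine Finset.sum_congr rfl fun p _ => ?_
    rw [det_apply', Finset.sum_mul]
    refine Finset.sum_congr rfl fun σ _ => ?_
    simp only [submatrix_apply, id_eq, Finset.prod_mul_distrib]
    ring
  rw [step1]
  rw [← Finset.sum_subset (Finset.filter_subset (fun p : Fin k → Fin ℓ =>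
      Function.Injective p) Finset.univ) ?zero]
  case zero =>
    intro p _ hp
    simp only [Finset.mem_filter, Finset.mem_univ, true_and] at hp
    rw [Function.not_injective_iff] at hp
    obtain ⟨i, j, hval, hne⟩ := hp
    rw [Matrix.det_zero_of_column_eq hne (fun m => by simp [hval]), zero_mul]
  rw [show (∑ μ ∈ Finset.univ.filter (fun μ : Fin k → Fin ℓ => StrictMono μ),
      (X.submatrix id μ).det * (Y.submatrix μ id).det) =
      ∑ q ∈ (Finset.univ.filter (fun μ : Fin k → Fin ℓ => StrictMono μ)) ×ˢ
        (Finset.univ : Finset (Equiv.Perm (Fin k))),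
        (X.submatrix id (q.1 ∘ q.2)).det * ∏ i, Y (q.1 (q.2 i)) i from ?rhs]
  case rhs =>
    rw [Finset.sum_product]
    refine Finset.sum_congr rfl fun μ hμ => ?_
    have hperm : ∀ σ : Equiv.Perm (Fin k),
        (X.submatrix id (μ ∘ σ)).det = Equiv.Perm.sign σ * (X.submatrix id μ).det := by
      intro σ
      have : X.submatrix id (μ ∘ σ) = (X.submatrix id μ).submatrix id σ := rfl
      rw [this, Matrix.det_permute']
    simp_rw [hperm]
    have hY : (Y.submatrix μ id).det =
        ∑ σ : Equiv.Perm (Fin k), (Equiv.Perm.sign σ : ℂ) * ∏ i, Y (μ (σ i)) i := by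
      rw [det_apply']
      refine Finset.sum_congr rfl fun σ _ => ?_
      simp [submatrix_apply]
    rw [hY, Finset.mul_sum]
    refine Finset.sum_congr rfl fun σ _ => ?_
    ring
  refine Finset.sum_nbij' (fun p => (p ∘ Tuple.sort p, (Tuple.sort p)⁻¹))
    (fun q => q.1 ∘ q.2) ?_ ?_ ?_ ?_ ?_
  · intro p hp
    simp only [Finset.mem_filter, Finset.mem_univ, true_and] at hp
    simp only [Finset.mem_product, Finset.mem_filter, Finset.mem_univ, true_and, and_true]
    exact (Tuple.monotone_sort p).strictMono_of_injective
      (hp.comp (Tuple.sort p).injective)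
  · intro q hq
    simp only [Finset.mem_product, Finset.mem_filter, Finset.mem_univ, true_and,
      and_true] at hq
    exact Finset.mem_filter.2 ⟨Finset.mem_univ _, (hq.injective).comp q.2.injective⟩
  · intro p hp
    funext i
    simp
  · intro q hq
    simp only [Finset.mem_product, Finset.mem_filter, Finset.mem_univ, true_and,
      and_true] at hq
    have hμ := hq
    have hsort : Tuple.sort (q.1 ∘ q.2) = q.2⁻¹ := by
      symm
      rw [Tuple.eq_sort_iff]
      constructor
      · have : (q.1 ∘ q.2) ∘ ⇑q.2⁻¹ = q.1 := by funext i; simp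
        rw [this]; exact hμ.monotone
      · intro i j hij heq
        exfalso
        have : (i : Fin k) = j := hμ.injective (by simpa using heq)
        exact absurd this hij.ne
    refine Prod.ext ?_ ?_
    · funext i
      simp [hsort]
    · simp [hsort]
  · intro p hp
    have hc : (p ∘ ⇑(Tuple.sort p)) ∘ ⇑(Tuple.sort p)⁻¹ = p := by funext i; simp
    simp only []
    rw [hc]
    simp

end CauchyBinet

theorem det_matB_formula (ℓ k : ℕ) (hℓ : 1 ≤ ℓ) (hk1 : 1 ≤ k) (hk : k ≤ ℓ)
    (α β : Fin k → ℂ) (hα : ∀ i, α i ≠ 0) (hβ : ∀ i, β i ≠ 0)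
    (r : Fin k → ℂ) (hinj : Function.Injective r) :
    (Matrix.of fun i j : Fin k => (α i + r j * β i) ^ (ℓ - 1)).det =
      (∏ i : Fin k, α i ^ (ℓ - 1)) *
        ∑ μ ∈ Finset.univ.filter (fun μ : Fin k → Fin ℓ => StrictMono μ),
          (∏ j : Fin k, ((ℓ - 1).choose (μ j : ℕ) : ℂ)) *
            genVandermonde k (fun j => (μ j : ℕ)) r *
              genVandermonde k (fun j => (μ j : ℕ)) (fun i => β i / α i) := by
  set ρ : Fin k → ℂ := fun i => β i / α i with hρ
  set X : Matrix (Fin k) (Fin ℓ) ℂ :=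
    Matrix.of fun i m => ((ℓ - 1).choose (m : ℕ) : ℂ) * ρ i ^ (m : ℕ) with hX
  set Y : Matrix (Fin ℓ) (Fin k) ℂ := Matrix.of fun m j => r j ^ (m : ℕ) with hY
  have hB : (Matrix.of fun i j : Fin k => (α i + r j * β i) ^ (ℓ - 1)) =
      Matrix.of fun i j => α i ^ (ℓ - 1) * (X * Y) i j := by
    ext i j
    simp only [Matrix.of_apply, Matrix.mul_apply, hX, hY, Matrix.of_apply]
    have h1 : α i + r j * β i = α i * (1 + r j * ρ i) := by
      rw [mul_add, mul_one, hρ, mul_comm (α i), mul_assoc, div_mul_cancel₀ _ (hα i)]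
    have h2 : (1 + r j * ρ i) ^ (ℓ - 1) =
        ∑ m : Fin ℓ, (r j * ρ i) ^ (m : ℕ) * ((ℓ - 1).choose (m : ℕ) : ℂ) := by
      rw [Fin.sum_univ_eq_sum_range (fun m => (r j * ρ i) ^ m * ((ℓ - 1).choose m : ℂ)) ℓ,
        ← Nat.sub_add_cancel hℓ, add_comm (1 : ℂ)]
      simpa using add_pow (r j * ρ i) 1 (ℓ - 1 + 1 - 1)
    rw [h1, mul_pow, h2]
    congr 1
    refine Finset.sum_congr rfl fun m _ => ?_
    rw [mul_pow]
    ring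
  rw [hB]
  rw [show (Matrix.of fun i j => α i ^ (ℓ - 1) * (X * Y) i j).det =
      (∏ i : Fin k, α i ^ (ℓ - 1)) * (X * Y).det from
    Matrix.det_mul_column (fun i => α i ^ (ℓ - 1)) (X * Y)]
  rw [cauchyBinet]
  congr 1
  refine Finset.sum_congr rfl fun μ _ => ?_
  have hXd : (X.submatrix id μ).det =
      (∏ j : Fin k, ((ℓ - 1).choose (μ j : ℕ) : ℂ)) *
        genVandermonde k (fun j => (μ j : ℕ)) ρ := by
    have : X.submatrix id μ = Matrix.of fun i j : Fin k =>
        ((ℓ - 1).choose (μ j : ℕ) : ℂ) * (Matrix.of fun i j : Fin k => ρ i ^ (μ j : ℕ)) i j := by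
      ext i j; simp [hX]
    rw [this, Matrix.det_mul_row]
    rfl
  have hYd : (Y.submatrix μ id).det = genVandermonde k (fun j => (μ j : ℕ)) r := by
    have h : Y.submatrix μ id =
        Matrix.transpose (Matrix.of fun i j : Fin k => r i ^ (μ j : ℕ)) := by
      ext i j; simp [hY, Matrix.transpose_apply]
    rw [h, Matrix.det_transpose]
    rfl
  rw [hXd, hYd]
  ring
end

section
/- Let ℓ ≥ 1 and 1 ≤ k ≤ ℓ be integers, let α = (α_1, …, α_k), β = (β_1, …, β_k) be nonzero complex numbers with ρ_i = β_i/α_i, and let r = (r_1, …, r_k) be pairwise distinct complex numbers. Define the k×k complex matrix B by B_{ij} = (α_i + r_j·β_i)^{ℓ-1}. Then det(B) = (-1)^{k(k-1)/2} · ∏_{i=1}^{k} β_i^{ℓ-1} · ∑_{0 ≤ μ_1 < … < μ_k ≤ ℓ-1} (∏_{j=1}^{k} C(ℓ-1, μ_j)) · V_{k,μ}(r_1, …, r_k) · V_{k,μ^∁}(1/ρ_1, …, 1/ρ_k), where for μ = (μ_1, …, μ_k) the complementary sequence is μ^∁ = (ℓ-1-μ_k, …, ℓ-1-μ_1). -/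
open scoped Classical

/-!
Since `α i + r j * β i = β i * (r j + α i / β i)`, the binomial theorem factors the matrix as
`A * V` with `A i t = β i ^ (ℓ - 1) * C(ℓ - 1, t) * (α i / β i) ^ (ℓ - 1 - t)` (of size `k × ℓ`)
and `V t j = r j ^ t`. Cauchy–Binet expands `det (A * V)` over the strictly increasing
`μ : Fin k → Fin ℓ`. The minor of `V` is `V_{k,μ}(r)`; pulling the row factors `β i ^ (ℓ - 1)`
and the column factors `C(ℓ - 1, μ j)` out of the minor of `A` leaves a generalized Vandermonde
determinant in `α / β = ρ⁻¹` with the decreasing exponents `ℓ - 1 - μ j`, and reversing its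
columns turns it into `V_{k,μ^∁}(ρ⁻¹)` at the cost of the sign `(-1) ^ (k(k-1)/2)` of the
reversal of `Fin k`.
-/

open Equiv Finset Matrix

theorem Fin.revPerm_succ (n : ℕ) :
    (Fin.revPerm : Perm (Fin (n + 1))) =
      Perm.decomposeFin.symm (0, Fin.revPerm) * finRotate (n + 1) := by
  ext i
  induction i using Fin.lastCases with
  | last => simp [Perm.decomposeFin_symm_apply_zero]
  | cast i =>
    rw [Perm.mul_apply, finRotate_apply, Fin.coeSucc_eq_succ,
      Perm.decomposeFin_symm_apply_succ, swap_self, refl_apply]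
    simp only [revPerm_apply, val_rev, val_castSucc, val_succ]
    omega

theorem Fin.sign_revPerm (n : ℕ) :
    Perm.sign (Fin.revPerm : Perm (Fin n)) = (-1) ^ (n * (n - 1) / 2) := by
  induction n with
  | zero => rfl
  | succ n ih =>
    have triangle_succ : (n + 1) * n / 2 = n * (n - 1) / 2 + n := by
      rcases n with _ | n
      · rfl
      · rw [Nat.add_sub_cancel, show (n + 2) * (n + 1) = (n + 1) * n + (n + 1) * 2 by ring,
          Nat.add_mul_div_right _ _ two_pos]
    rw [Fin.revPerm_succ, Perm.sign_mul, Perm.decomposeFin.symm_sign, ih, sign_finRotate,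
      if_pos rfl, one_mul, ← pow_add, Nat.add_sub_cancel, triangle_succ]

theorem Tuple.sort_strictMono_comp {k : ℕ} {ι : Type*} [LinearOrder ι] {μ : Fin k → ι}
    (hμ : StrictMono μ) (σ : Perm (Fin k)) : Tuple.sort (μ ∘ σ) = σ⁻¹ := by
  refine (Tuple.eq_sort_iff.mpr ⟨?_, fun i j hij heq => ?_⟩).symm
  · simpa [Function.comp_def] using hμ.monotone
  · simp only [Perm.coe_inv, Function.comp_apply, apply_symm_apply] at heq
    exact absurd (hμ.injective heq) hij.ne

theorem Finset.sum_injective_eq_sum_strictMono_sum_perm {M : Type*} [AddCommMonoid M] {k : ℕ}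
    {ι : Type*} [LinearOrder ι] [Fintype ι] (g : (Fin k → ι) → M) :
    ∑ f with Function.Injective f, g f =
      ∑ μ with StrictMono μ, ∑ σ : Perm (Fin k), g (μ ∘ σ) := by
  rw [← sum_product']
  refine sum_nbij' (fun f => (f ∘ Tuple.sort f, (Tuple.sort f)⁻¹)) (fun p => p.1 ∘ p.2)
    ?_ ?_ ?_ ?_ ?_
  · intro f hf
    simp only [mem_filter_univ, mem_product, mem_univ, and_true] at hf ⊢
    exact (Tuple.monotone_sort f).strictMono_of_injective (hf.comp (Tuple.sort f).injective)
  · rintro ⟨μ, σ⟩ hμ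
    simp only [mem_filter_univ, mem_product, mem_univ, and_true] at hμ ⊢
    exact hμ.injective.comp σ.injective
  · intro f _
    ext i
    simp
  · rintro ⟨μ, σ⟩ hμ
    simp only [mem_filter_univ, mem_product, mem_univ, and_true] at hμ
    ext i <;> simp [Tuple.sort_strictMono_comp hμ]
  · intro f _
    simp [Function.comp_assoc]

namespace Matrix

variable {R : Type*} [CommRing R]

theorem det_mul_eq_sum_prod_mul_det_submatrix {m ι : Type*} [Fintype m] [DecidableEq m]
    [Fintype ι] (A : Matrix m ι R) (B : Matrix ι m R) :
    (A * B).det = ∑ f : m → ι, (∏ i, A i (f i)) * (B.submatrix f id).det := by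
  have rows : A * B = fun i => ∑ j, A i j • B j := by
    funext i l
    simp [mul_apply]
  calc (A * B).det = detRowAlternating (fun i => ∑ j, A i j • B j) := congrArg det rows
    _ = ∑ f : m → ι, detRowAlternating (fun i => A i (f i) • B (f i)) :=
      detRowAlternating.map_sum fun i j => A i j • B j
    _ = ∑ f : m → ι, (∏ i, A i (f i)) * (B.submatrix f id).det :=
      sum_congr rfl fun f _ =>
        detRowAlternating.map_smul_univ (fun i => A i (f i)) (fun i => B (f i))

theorem det_mul_eq_sum_strictMono {k : ℕ} {ι : Type*} [LinearOrder ι] [Fintype ι]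
    (A : Matrix (Fin k) ι R) (B : Matrix ι (Fin k) R) :
    (A * B).det = ∑ μ with StrictMono μ, (A.submatrix id μ).det * (B.submatrix μ id).det := by
  have only_injective : ∀ f ∈ (univ : Finset (Fin k → ι)),
      (∏ i, A i (f i)) * (B.submatrix f id).det ≠ 0 → Function.Injective f := by
    intro f _ hf a b hab
    by_contra hne
    exact hf (by rw [det_zero_of_row_eq hne (by ext j; simp [hab]), mul_zero])
  rw [det_mul_eq_sum_prod_mul_det_submatrix, ← sum_filter_of_ne only_injective,
    sum_injective_eq_sum_strictMono_sum_perm]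
  refine sum_congr rfl fun μ _ => ?_
  have permute_rows (σ : Perm (Fin k)) :
      (B.submatrix (μ ∘ σ) id).det = Perm.sign σ * (B.submatrix μ id).det :=
    det_permute σ (B.submatrix μ id)
  simp_rw [permute_rows, ← mul_assoc, ← sum_mul, ← det_transpose (A.submatrix id μ), det_apply']
  congr 1
  exact sum_congr rfl fun σ _ => mul_comm _ _

theorem of_add_mul_pow_eq_mul_s6 {K : Type*} [Field K] {m p : Type*} (n : ℕ)
    (α β : m → K) (r : p → K) (hβ : ∀ i, β i ≠ 0) :
    of (fun i j => (α i + r j * β i) ^ n) =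
      of (fun i (t : Fin (n + 1)) => β i ^ n * (n.choose t * (α i / β i) ^ (n - t))) *
        of (fun (t : Fin (n + 1)) j => r j ^ (t : ℕ)) := by
  ext i j
  have factor : α i + r j * β i = β i * (r j + α i / β i) := by
    field_simp [hβ i]
    ring
  rw [of_apply, factor, mul_pow, add_pow, mul_sum, ← Fin.sum_univ_eq_sum_range, mul_apply]
  refine sum_congr rfl fun t _ => ?_
  simp only [of_apply]
  ring

end Matrix

theorem genVandermonde_eq_neg_one_pow_mul_rev (k : ℕ) (e : Fin k → ℕ) (ν : Fin k → ℂ) :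
    genVandermonde k e ν = (-1) ^ (k * (k - 1) / 2) * genVandermonde k (fun j => e j.rev) ν := by
  have reverse : genVandermonde k (fun j => e j.rev) ν =
      (-1) ^ (k * (k - 1) / 2) * genVandermonde k e ν := by
    rw [genVandermonde, genVandermonde, show (of fun i j => ν i ^ e j.rev) =
      (of fun i j => ν i ^ e j).submatrix id Fin.revPerm from rfl, det_permute', Fin.sign_revPerm]
    push_cast
    rfl
  rw [reverse, ← mul_assoc, ← mul_pow, neg_one_mul, neg_neg, one_pow, one_mul]

theorem det_matB_formula'_general (ℓ k : ℕ) (hℓ : 1 ≤ ℓ)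
    (α β : Fin k → ℂ) (hβ : ∀ i, β i ≠ 0)
    (r : Fin k → ℂ) :
    (Matrix.of fun i j : Fin k => (α i + r j * β i) ^ (ℓ - 1)).det =
      (-1 : ℂ) ^ (k * (k - 1) / 2) * (∏ i : Fin k, β i ^ (ℓ - 1)) *
        ∑ μ ∈ Finset.univ.filter (fun μ : Fin k → Fin ℓ => StrictMono μ),
          (∏ j : Fin k, ((ℓ - 1).choose (μ j : ℕ) : ℂ)) *
            genVandermonde k (fun j => (μ j : ℕ)) r *
              genVandermonde k (fun j => ℓ - 1 - (μ j.rev : ℕ))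
                (fun i => (β i / α i)⁻¹) := by
  obtain ⟨n, rfl⟩ := Nat.exists_eq_add_of_le' hℓ
  simp only [Nat.add_sub_cancel, inv_div]
  rw [of_add_mul_pow_eq_mul_s6 n α β r hβ, det_mul_eq_sum_strictMono, mul_sum]
  refine sum_congr rfl fun μ _ => ?_
  have vandermonde_side : ((of fun (t : Fin (n + 1)) j => r j ^ (t : ℕ)).submatrix μ id).det =
      genVandermonde k (fun j => μ j) r := by
    rw [← det_transpose]
    rfl
  have binomial_side : ((of fun i (t : Fin (n + 1)) =>
      β i ^ n * (n.choose t * (α i / β i) ^ (n - t))).submatrix id μ).det =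
      (∏ i, β i ^ n) * ((∏ j, (n.choose (μ j) : ℂ)) *
        genVandermonde k (fun j => n - μ j) (fun i => α i / β i)) := by
    rw [genVandermonde, ← det_mul_row, ← det_mul_column]
    rfl
  rw [vandermonde_side, binomial_side, genVandermonde_eq_neg_one_pow_mul_rev k (fun j => n - μ j)]
  ring

theorem det_matB_formula' (ℓ k : ℕ) (hℓ : 1 ≤ ℓ) (hk1 : 1 ≤ k) (hk : k ≤ ℓ)
    (α β : Fin k → ℂ) (hα : ∀ i, α i ≠ 0) (hβ : ∀ i, β i ≠ 0)
    (r : Fin k → ℂ) (hinj : Function.Injective r) :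
    (Matrix.of fun i j : Fin k => (α i + r j * β i) ^ (ℓ - 1)).det =
      (-1 : ℂ) ^ (k * (k - 1) / 2) * (∏ i : Fin k, β i ^ (ℓ - 1)) *
        ∑ μ ∈ Finset.univ.filter (fun μ : Fin k → Fin ℓ => StrictMono μ),
          (∏ j : Fin k, ((ℓ - 1).choose (μ j : ℕ) : ℂ)) *
            genVandermonde k (fun j => (μ j : ℕ)) r *
              genVandermonde k (fun j => ℓ - 1 - (μ j.rev : ℕ))
                (fun i => (β i / α i)⁻¹) :=
  det_matB_formula'_general ℓ k hℓ α β hβ r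
end

section
/- Let ℓ ≥ 1 and 1 ≤ κ ≤ ℓ+1 be integers. Let A^{[κ]} be the ℓ×ℓ real matrix with entries (A^{[κ]})_{ij} = ((i-1)(ℓ+1) + r_j^{[κ]})^{ℓ-1}, where r_j^{[κ]} = j for 1 ≤ j ≤ κ-1 and r_j^{[κ]} = j+1 for κ ≤ j ≤ ℓ. Then det(A^{[κ]}) = (-1)^ℓ · σ_ℓ · C(ℓ, κ-1), where σ_ℓ = (-1)^{ℓ(ℓ+1)/2} · (ℓ+1)^{ℓ(ℓ-1)/2} · ∏_{j=0}^{ℓ-1} C(ℓ-1,j) · ∏_{j=1}^{ℓ-1} (j!)^2. -/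
/-- The sequence `r^{[κ]}`: the integers `1, …, ℓ+1` with the value `κ` omitted; here
`j : Fin ℓ` corresponds to the 1-indexed position `j+1`. -/
def rseq (κ : ℕ) (j : ℕ) : ℕ := if j < κ then j else j + 1

/-!
Expanding `(i(ℓ+1) + r_j)^(ℓ-1)` binomially factors `A^{[κ]}` as `V(x) · diag(C(ℓ-1,k)) · W(r)`,
where `V(x)` is the Vandermonde matrix of the points `x_i = (ℓ+1)i` and `W(r)` is the Vandermonde
matrix of the `r_j` with its columns reversed, which costs the sign `(-1)^(ℓ(ℓ-1)/2)`.
Scaling the points by `ℓ+1` gives `det V(x) = (ℓ+1)^(ℓ(ℓ-1)/2) · sf(ℓ-1)`. The `r_j` are the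
points `1, …, ℓ+1` without `κ`; removing the point `p = κ-1` from `0, …, ℓ` divides the
Vandermonde determinant `sf ℓ` by `p! (ℓ-p)!` (the product of the differences with `p`),
leaving `C(ℓ, κ-1) · sf(ℓ-1)`.
-/

open Finset Matrix Nat

section

variable {R : Type*} [CommRing R] {n : ℕ}

theorem Fin.val_succAbove (p : Fin (n + 1)) (i : Fin n) :
    (p.succAbove i : ℕ) = if (i : ℕ) < p then (i : ℕ) else (i : ℕ) + 1 := by
  unfold Fin.succAbove
  split_ifs <;> simp_all [Fin.lt_def]

theorem prod_range_natCast_sub_self (m : ℕ) :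
    ∏ k ∈ range m, ((k : R) - m) = (-1) ^ m * m ! := by
  have h : ∀ k ∈ range m, ((k : R) - m) = -1 * ((m : R) - k) := fun k _ => by ring
  rw [prod_congr rfl h, prod_mul_distrib, prod_const, card_range,
    ← descPochhammer_eval_eq_prod_range, descPochhammer_eval_eq_descFactorial, descFactorial_self]

theorem Fin.prod_succAbove_sub (p : Fin (n + 1)) :
    ∏ j : Fin n, ((p.succAbove j : ℕ) - (p : R)) = (-1) ^ (p : ℕ) * ((p : ℕ)! * (n - p)!) := by
  have hp : (p : ℕ) ≤ n := Nat.lt_succ_iff.mp p.isLt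
  simp only [Fin.val_succAbove]
  rw [Fin.prod_univ_eq_prod_range (fun k => ((if k < (p : ℕ) then k else k + 1 : ℕ) : R) - p),
    ← prod_range_mul_prod_Ico _ hp, prod_Ico_eq_prod_range]
  have below : ∏ k ∈ range p, (((if k < (p : ℕ) then k else k + 1 : ℕ) : R) - p) =
      (-1) ^ (p : ℕ) * (p : ℕ)! := by
    rw [← prod_range_natCast_sub_self]
    exact prod_congr rfl fun k hk => by rw [if_pos (mem_range.mp hk)]
  have above : ∏ k ∈ range (n - p),
      (((if (p : ℕ) + k < p then (p : ℕ) + k else (p : ℕ) + k + 1 : ℕ) : R) - p) =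
        (n - p : ℕ)! := by
    rw [← prod_range_add_one_eq_factorial, Nat.cast_prod]
    refine prod_congr rfl fun k _ => ?_
    rw [if_neg (by omega)]
    push_cast
    ring
  rw [below, above, mul_assoc]

theorem Matrix.det_vandermonde_cons (a : R) (v : Fin n → R) :
    (vandermonde (Fin.cons a v : Fin (n + 1) → R)).det =
      (∏ j, (v j - a)) * (vandermonde v).det := by
  simp only [det_vandermonde, Fin.prod_univ_succ, Fin.prod_Ioi_zero, Fin.prod_Ioi_succ,
    Fin.cons_zero, Fin.cons_succ]

theorem Matrix.det_vandermonde_const_mul_s7 (c : R) (v : Fin n → R) :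
    (vandermonde fun i => c * v i).det = c ^ (n * (n - 1) / 2) * (vandermonde v).det := by
  have h : (vandermonde fun i => c * v i) =
      of fun i (j : Fin n) => c ^ (j : ℕ) * vandermonde v i j := by
    ext i j
    simp [mul_pow]
  rw [h, det_mul_row, prod_pow_eq_pow_sum, Fin.sum_univ_eq_sum_range (fun j => j), sum_range_id]

theorem Matrix.det_projVandermonde_one_left (w : Fin n → R) :
    (projVandermonde 1 w).det = (-1) ^ (n * (n - 1) / 2) * (vandermonde w).det := by
  rw [← det_vandermonde_const_mul_s7, det_projVandermonde, det_vandermonde]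
  simp only [Pi.one_apply, one_mul]
  exact prod_congr rfl fun i _ => prod_congr rfl fun j _ => by ring

theorem Matrix.of_add_pow_eq_vandermonde_mul (x y : Fin n → R) :
    (of fun i j => (x i + y j) ^ (n - 1)) =
      vandermonde x * diagonal (fun k : Fin n => ((n - 1).choose k : R)) *
        (projVandermonde 1 y)ᵀ := by
  ext i j
  cases n with
  | zero => exact i.elim0
  | succ n =>
    rw [mul_apply]
    simp only [of_apply, mul_diagonal, vandermonde_apply, transpose_apply, projVandermonde_apply,
      Pi.one_apply, one_pow, one_mul, Fin.val_rev, add_pow, Nat.add_sub_cancel]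
    rw [Fin.sum_univ_eq_sum_range (fun k => x i ^ k * (n.choose k : R) * y j ^ (n + 1 - (k + 1)))]
    exact sum_congr rfl fun k _ => by rw [Nat.add_sub_add_right]; ring

theorem Matrix.det_of_add_pow_s7 (x y : Fin n → R) :
    (of fun i j => (x i + y j) ^ (n - 1)).det =
      (-1) ^ (n * (n - 1) / 2) * (∏ k : Fin n, ((n - 1).choose k : R)) *
        (vandermonde x).det * (vandermonde y).det := by
  rw [of_add_pow_eq_vandermonde_mul, det_mul, det_mul, det_diagonal, det_transpose,
    det_projVandermonde_one_left]
  ring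

theorem Matrix.det_vandermonde_eq_mul_succAbove (v : Fin (n + 1) → R) (p : Fin (n + 1)) :
    (-1) ^ (p : ℕ) * (vandermonde v).det =
      (∏ j, (v (p.succAbove j) - v p)) * (vandermonde (v ∘ p.succAbove)).det := by
  have hperm : vandermonde (Fin.cons (v p) (v ∘ p.succAbove)) =
      (vandermonde v).submatrix p.cycleRange.symm id := by
    rw [show v ∘ p.succAbove = p.removeNth v from rfl,
      Fin.cons_removeNth_eq_comp_cycleRange_symm]
    rfl
  have hsign : ((Equiv.Perm.sign p.cycleRange.symm : ℤ) : R) = (-1) ^ (p : ℕ) := by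
    simp [Fin.sign_cycleRange]
  rw [← hsign, ← det_permute, ← hperm, det_vandermonde_cons]
  rfl

theorem Matrix.det_vandermonde_succAbove [IsDomain R] [CharZero R] (p : Fin (n + 2)) :
    (vandermonde fun j : Fin (n + 1) => ((p.succAbove j : ℕ) : R)).det =
      (n + 1).choose p * sf n := by
  have h := det_vandermonde_eq_mul_succAbove (fun i : Fin (n + 2) => ((i : ℕ) : R)) p
  rw [det_vandermonde_id_eq_superFactorial, Fin.prod_succAbove_sub, mul_assoc] at h
  have hsf : (vandermonde fun j : Fin (n + 1) => ((p.succAbove j : ℕ) : R)).det *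
      ((p : ℕ)! * (n + 1 - p)!) = sf (n + 1) := by
    rw [mul_comm]
    exact (mul_left_cancel₀ (by simp) h).symm
  have hfac : ((p : ℕ)! * (n + 1 - p)! : R) ≠ 0 := by norm_cast; positivity
  have hp : (p : ℕ) ≤ n + 1 := Nat.lt_succ_iff.mp p.isLt
  apply mul_right_cancel₀ hfac
  rw [hsf, Nat.superFactorial_succ, ← Nat.choose_mul_factorial_mul_factorial hp]
  push_cast
  ring

end

theorem rseq_succ_eq_succAbove {n : ℕ} (p : Fin (n + 1)) (j : Fin n) :
    rseq ((p : ℕ) + 1) ((j : ℕ) + 1) = (p.succAbove j : ℕ) + 1 := by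
  rw [Fin.val_succAbove]
  unfold rseq
  split_ifs <;> omega

theorem neg_one_pow_mul_sigma_succ (n : ℕ) :
    (-1 : ℝ) ^ (n + 1) * sigma (n + 1) =
      (-1) ^ ((n + 1) * n / 2) * (n + 2 : ℝ) ^ ((n + 1) * n / 2) *
        (∏ k : Fin (n + 1), (n.choose k : ℝ)) * (sf n : ℝ) ^ 2 := by
  have hexp : (n + 1) * (n + 1 + 1) / 2 = (n + 1) * n / 2 + (n + 1) := by
    rw [show (n + 1) * (n + 1 + 1) = (n + 1) * n + 2 * (n + 1) by ring,
      Nat.add_mul_div_left _ _ two_pos]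
  have hsign :
      (-1 : ℝ) ^ (n + 1) * (-1) ^ ((n + 1) * (n + 1 + 1) / 2) = (-1) ^ ((n + 1) * n / 2) := by
    rw [hexp, ← pow_add, show n + 1 + ((n + 1) * n / 2 + (n + 1)) = (n + 1) * n / 2 + 2 * (n + 1)
      by ring, pow_add, pow_mul, neg_one_sq, one_pow, mul_one]
  have hfac : ∏ j ∈ Ico 1 (n + 1), ((j ! : ℕ) : ℝ) ^ 2 = (sf n : ℝ) ^ 2 := by
    rw [Ico_add_one_right_eq_Icc, prod_pow, ← Nat.cast_prod, prod_Icc_factorial]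
  unfold sigma
  rw [hfac, ← Fin.prod_univ_eq_prod_range (fun j => ((n + 1 - 1).choose j : ℝ)), ← hsign]
  push_cast
  ring

theorem det_submatrix (ℓ κ : ℕ) (hℓ : 1 ≤ ℓ) (hκ1 : 1 ≤ κ) (hκ : κ ≤ ℓ + 1) :
    (Matrix.of fun i j : Fin ℓ =>
        ((((i : ℕ) * (ℓ + 1) + rseq κ ((j : ℕ) + 1) : ℕ)) : ℝ) ^ (ℓ - 1)).det =
      (-1 : ℝ) ^ ℓ * sigma ℓ * (ℓ.choose (κ - 1) : ℝ) := by
  obtain ⟨n, rfl⟩ := Nat.exists_eq_add_of_le' hℓ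
  obtain ⟨p, rfl⟩ : ∃ p : Fin (n + 2), (p : ℕ) + 1 = κ := ⟨⟨κ - 1, by omega⟩, by simp; omega⟩
  have hentry : (of fun i j : Fin (n + 1) =>
      ((((i : ℕ) * (n + 1 + 1) + rseq ((p : ℕ) + 1) ((j : ℕ) + 1) : ℕ)) : ℝ) ^ (n + 1 - 1)) =
      of fun i j : Fin (n + 1) =>
        ((n + 2 : ℝ) * (i : ℕ) + ((p.succAbove j : ℕ) + 1 : ℝ)) ^ (n + 1 - 1) := by
    ext i j
    rw [of_apply, of_apply, rseq_succ_eq_succAbove]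
    push_cast
    ring
  rw [hentry, det_of_add_pow_s7, det_vandermonde_const_mul_s7, det_vandermonde_id_eq_superFactorial,
    det_vandermonde_add, det_vandermonde_succAbove, neg_one_pow_mul_sigma_succ]
  simp only [Nat.add_sub_cancel]
  ring
end

section
/- Let ℓ ≥ 1 and 1 ≤ κ ≤ ℓ+1 be integers, and define r_j^{[κ]} = j for 1 ≤ j ≤ κ-1 and r_j^{[κ]} = j+1 for κ ≤ j ≤ ℓ. Then ∏_{1 ≤ i_1 < i_2 ≤ ℓ} (r_{i_2}^{[κ]} - r_{i_1}^{[κ]}) = C(ℓ, κ-1) · ∏_{j=1}^{ℓ-1} j!. -/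
open Finset Nat

section

variable {R : Type*} [CommRing R]

def vandermondeProd (v : ℕ → R) (n : ℕ) : R :=
  ∏ j ∈ range n, ∏ i ∈ range j, (v j - v i)

theorem prod_filter_fin_lt_sub_eq_vandermondeProd (v : ℕ → R) (n : ℕ) :
    ∏ p ∈ univ.filter (fun p : Fin n × Fin n => p.1 < p.2), (v p.2 - v p.1) =
      vandermondeProd v n := by
  rw [prod_finset_product_right' (f := fun i j : Fin n => v j - v i) _ univ (fun j => Iio j)
    (by simp), vandermondeProd, ← Fin.prod_univ_eq_prod_range]
  refine prod_congr rfl fun j _ => ?_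
  rw [← Nat.Iio_eq_range, ← Fin.map_valEmbedding_Iio, prod_map]
  rfl

theorem vandermondeProd_succ (v : ℕ → R) (n : ℕ) :
    vandermondeProd v (n + 1) = vandermondeProd v n * ∏ i ∈ range n, (v n - v i) :=
  prod_range_succ _ _

theorem vandermondeProd_congr {v w : ℕ → R} {n : ℕ} (h : ∀ j < n, v j = w j) :
    vandermondeProd v n = vandermondeProd w n :=
  prod_congr rfl fun j hj => prod_congr rfl fun i hi => by
    rw [h j (mem_range.1 hj), h i ((mem_range.1 hi).trans (mem_range.1 hj))]

theorem prod_range_natCast_sub (m k : ℕ) (h : k ≤ m) :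
    ∏ i ∈ range k, ((m : R) - i) = m.descFactorial k := by
  rw [descFactorial_eq_prod_range, Nat.cast_prod]
  exact prod_congr rfl fun i hi => by
    rw [Nat.cast_sub ((mem_range.1 hi).le.trans h)]

theorem vandermondeProd_natCast_add (c : R) (n : ℕ) :
    vandermondeProd (fun j => (j : R) + c) n = ∏ j ∈ range n, (j ! : R) :=
  prod_congr rfl fun j _ => by
    simp_rw [add_sub_add_right_eq_sub]
    rw [prod_range_natCast_sub j j le_rfl, descFactorial_self]

theorem prod_range_rseq_sub {κ n : ℕ} (h1 : 1 ≤ κ) (h2 : κ ≤ n + 1) :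
    ∏ i ∈ range n, ((rseq κ (n + 1) : R) - rseq κ (i + 1)) =
      (n + 1).descFactorial (κ - 1) * (n + 1 - κ) ! := by
  obtain ⟨m, rfl⟩ : ∃ m, n = κ - 1 + m := ⟨n + 1 - κ, by omega⟩
  have hlast : rseq κ (κ - 1 + m + 1) = κ - 1 + m + 2 := if_neg (by omega)
  have hlow : ∀ i < κ - 1, rseq κ (i + 1) = i + 1 := fun i hi => if_pos (by omega)
  have hhigh : ∀ t, rseq κ (κ - 1 + t + 1) = κ - 1 + t + 2 := fun t => if_neg (by omega)
  rw [prod_range_add, show κ - 1 + m + 1 - κ = m by omega, ← descFactorial_self,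
    ← prod_range_natCast_sub (κ - 1 + m + 1) (κ - 1) (by omega),
    ← prod_range_natCast_sub m m le_rfl, hlast]
  congr 1
  · refine prod_congr rfl fun i hi => ?_
    rw [hlow i (mem_range.1 hi)]
    push_cast
    ring
  · refine prod_congr rfl fun t _ => ?_
    rw [hhigh t]
    push_cast
    ring

theorem vandermondeProd_rseq_mul_factorial {κ n : ℕ} (h1 : 1 ≤ κ) (h2 : κ ≤ n + 1) :
    vandermondeProd (fun j => (rseq κ (j + 1) : R)) n * ((κ - 1) ! * (n + 1 - κ) ! : ℕ) =
      ∏ j ∈ range (n + 1), (j ! : R) := by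
  induction n generalizing κ with
  | zero =>
    obtain rfl : κ = 1 := by omega
    simp [vandermondeProd]
  | succ n ih =>
    rcases Nat.lt_or_ge n (κ - 1) with hκ | hκ
    · obtain rfl : κ = n + 2 := by omega
      have hid : ∀ j < n + 1, (rseq (n + 2) (j + 1) : R) = j + 1 := fun j hj => by
        rw [rseq, if_pos (by omega), Nat.cast_succ]
      rw [vandermondeProd_congr hid, vandermondeProd_natCast_add, prod_range_succ _ (n + 1),
        tsub_self, factorial_zero, mul_one]
      rfl
    · rw [vandermondeProd_succ, prod_range_rseq_sub h1 (by omega), prod_range_succ _ (n + 1),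
        ← ih h1 (by omega), show n + 1 + 1 - κ = n + 1 - κ + 1 by omega, factorial_succ,
        ← factorial_mul_descFactorial (show κ - 1 ≤ n + 1 by omega),
        show n + 1 - (κ - 1) = n + 1 - κ + 1 by omega, factorial_succ]
      push_cast
      ring

end

theorem prod_rseq_diff_general (ℓ κ : ℕ) (hκ1 : 1 ≤ κ) (hκ : κ ≤ ℓ + 1) :
    ∏ p ∈ Finset.univ.filter (fun p : Fin ℓ × Fin ℓ => p.1 < p.2),
        ((rseq κ ((p.2 : ℕ) + 1) : ℝ) - (rseq κ ((p.1 : ℕ) + 1) : ℝ)) =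
      (ℓ.choose (κ - 1) : ℝ) * ∏ j ∈ Finset.Ico 1 ℓ, (j.factorial : ℝ) := by
  have hmain := vandermondeProd_rseq_mul_factorial (R := ℝ) hκ1 hκ
  rw [prod_range_succ, ← choose_mul_factorial_mul_factorial (show κ - 1 ≤ ℓ by omega),
    show ℓ - (κ - 1) = ℓ + 1 - κ by omega, mul_assoc, Nat.cast_mul (ℓ.choose _)] at hmain
  have hIco : ∏ j ∈ Ico 1 ℓ, (j ! : ℝ) = ∏ j ∈ range ℓ, (j ! : ℝ) :=
    prod_subset (fun j hj => mem_range.2 (mem_Ico.1 hj).2) fun j hjℓ hj => by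
      obtain rfl : j = 0 := by
        simp only [mem_range, mem_Ico, not_and, not_lt] at hjℓ hj
        omega
      simp
  rw [prod_filter_fin_lt_sub_eq_vandermondeProd (fun j => (rseq κ (j + 1) : ℝ)), hIco]
  exact mul_right_cancel₀ (by positivity) (hmain.trans (by ring))

theorem prod_rseq_diff (ℓ κ : ℕ) (hℓ : 1 ≤ ℓ) (hκ1 : 1 ≤ κ) (hκ : κ ≤ ℓ + 1) :
    ∏ p ∈ Finset.univ.filter (fun p : Fin ℓ × Fin ℓ => p.1 < p.2),
        ((rseq κ ((p.2 : ℕ) + 1) : ℝ) - (rseq κ ((p.1 : ℕ) + 1) : ℝ)) =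
      (ℓ.choose (κ - 1) : ℝ) * ∏ j ∈ Finset.Ico 1 ℓ, (j.factorial : ℝ) :=
  prod_rseq_diff_general ℓ κ hκ1 hκ
end

section
/- Let ℓ ≥ 1 be an integer and a = (a_0, …, a_ℓ) ∈ ℝ^{ℓ+1}. Let q̂_a be the unique polynomial of degree at most ℓ with q̂_a(i) = a_i for i = 0, …, ℓ. Then q̂_a(t) = ((-1)^ℓ/ℓ!) · ∑_{m=0}^{ℓ} ∑_{k=0}^{m} (-1)^{k+m} · τ_{ℓ,m-k,0} · (∑_{j=0}^{ℓ} (-1)^j · C(ℓ,j) · j^k · a_j) · t^{ℓ-m}, where τ_{ℓ,m,0} is the m-th elementary symmetric polynomial in 1, …, ℓ (with τ_{ℓ,0,0} = 1). -/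
open Polynomial Finset

lemma tau_zero (ℓ : ℕ) : tau ℓ 0 = 1 := by simp [tau]

lemma tau_eq_esymm (ℓ m : ℕ) :
    tau ℓ m = (Multiset.map (fun i : ℕ => (i : ℝ)) (Finset.Icc 1 ℓ).val).esymm m := by
  rw [Finset.esymm_map_val]; rfl

lemma claimP (n : ℕ) :
    ∏ i ∈ Finset.Icc 1 n, (X - C (i : ℝ)) =
    ∑ m ∈ Finset.range (n + 1), C ((-1 : ℝ) ^ m * tau n m) * X ^ (n - m) := by
  have hcard : (Multiset.map (fun i : ℕ => (i : ℝ)) (Finset.Icc 1 n).val).card = n := by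
    simp [Nat.card_Icc]
  have hprod : ∏ i ∈ Finset.Icc 1 n, (X - C (i : ℝ)) =
      ((Multiset.map (fun i : ℕ => (i : ℝ)) (Finset.Icc 1 n).val).map
        (fun t => X - C t)).prod := by
    rw [Multiset.map_map]; rfl
  ext d
  rw [finset_sum_coeff]
  simp only [coeff_C_mul, coeff_X_pow, mul_ite, mul_one, mul_zero]
  by_cases hd : d ≤ n
  · rw [hprod, Multiset.prod_X_sub_C_coeff _ (by rw [hcard]; exact hd)]
    rw [Finset.sum_eq_single (n - d)]
    · rw [if_pos (by omega), hcard, ← tau_eq_esymm]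
    · intro m hm hne
      rw [if_neg (by simp at hm; omega)]
    · intro h; exact absurd (Finset.mem_range.mpr (by omega)) h
  · rw [Finset.sum_eq_zero (fun m hm => by rw [if_neg (by simp at hm; omega)])]
    apply coeff_eq_zero_of_natDegree_lt
    have : (∏ i ∈ Finset.Icc 1 n, (X - C (i : ℝ))).natDegree = n := by
      rw [natDegree_prod _ _ (fun i _ => X_sub_C_ne_zero _),
        Finset.sum_congr rfl (fun i _ => natDegree_X_sub_C (x := ((i : ℕ) : ℝ)))]
      simp [Nat.card_Icc]
    omega

def bb (ℓ : ℕ) (x : ℝ) (m : ℕ) : ℝ :=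
  ∑ k ∈ Finset.range (m + 1), (-1 : ℝ) ^ (k + m) * tau ℓ (m - k) * x ^ k

lemma bb_zero (ℓ : ℕ) (x : ℝ) : bb ℓ x 0 = 1 := by simp [bb, tau_zero]

lemma bb_succ (ℓ : ℕ) (x : ℝ) (m : ℕ) :
    bb ℓ x (m + 1) = (-1 : ℝ) ^ (m + 1) * tau ℓ (m + 1) + x * bb ℓ x m := by
  simp only [bb]
  rw [Finset.sum_range_succ']
  simp only [Nat.succ_sub_succ, pow_zero, mul_one, Nat.sub_zero, zero_add]
  rw [add_comm, Finset.mul_sum]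
  congr 1
  refine Finset.sum_congr rfl fun k hk => ?_
  have : (-1 : ℝ) ^ (k + 1 + (m + 1)) = (-1 : ℝ) ^ (k + m) := by
    rw [show k + 1 + (m + 1) = (k + m) + 2 by ring, pow_add]; norm_num
  rw [this]; ring

noncomputable def Pg (ℓ n : ℕ) : ℝ[X] :=
  ∑ m ∈ Finset.range (n + 1), C ((-1 : ℝ) ^ m * tau ℓ m) * X ^ (n - m)

noncomputable def Qg (ℓ : ℕ) (x : ℝ) (n : ℕ) : ℝ[X] :=
  ∑ m ∈ Finset.range (n + 1), C (bb ℓ x m) * X ^ (n - m)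

lemma Pg_succ (ℓ n : ℕ) :
    Pg ℓ (n + 1) = X * Pg ℓ n + C ((-1 : ℝ) ^ (n + 1) * tau ℓ (n + 1)) := by
  rw [Pg, Finset.sum_range_succ, Pg, Finset.mul_sum]
  congr 1
  · refine Finset.sum_congr rfl fun m hm => ?_
    have hm' := Finset.mem_range.mp hm
    rw [show n + 1 - m = (n - m) + 1 by omega, pow_succ]
    ring
  · simp

lemma Qg_succ (ℓ : ℕ) (x : ℝ) (n : ℕ) :
    Qg ℓ x (n + 1) = X * Qg ℓ x n + C (bb ℓ x (n + 1)) := by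
  rw [Qg, Finset.sum_range_succ, Qg, Finset.mul_sum]
  congr 1
  · refine Finset.sum_congr rfl fun m hm => ?_
    have hm' := Finset.mem_range.mp hm
    rw [show n + 1 - m = (n - m) + 1 by omega, pow_succ]
    ring
  · simp

lemma claimD (ℓ : ℕ) (x : ℝ) (n : ℕ) :
    (X - C x) * Qg ℓ x n = X * Pg ℓ n - C (x * bb ℓ x n) := by
  induction n with
  | zero =>
      simp [Qg, Pg, bb_zero, tau_zero]
  | succ n ih =>
      rw [Qg_succ, Pg_succ, bb_succ, mul_add,
        show (X - C x) * (X * Qg ℓ x n) = X * ((X - C x) * Qg ℓ x n) by ring, ih]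
      simp only [C_add, C_mul]
      ring

lemma claimP' (n : ℕ) : ∏ i ∈ Finset.Icc 1 n, (X - C (i : ℝ)) = Pg n n := by
  rw [claimP]; rfl

lemma range_succ_eq_insert (ℓ : ℕ) : Finset.range (ℓ + 1) = insert 0 (Finset.Icc 1 ℓ) := by
  ext i; simp [Finset.mem_range, Finset.mem_Icc]; omega

lemma prod_range_eq_X_mul (ℓ : ℕ) :
    ∏ i ∈ Finset.range (ℓ + 1), (X - C (i : ℝ)) = X * Pg ℓ ℓ := by
  rw [range_succ_eq_insert, Finset.prod_insert (by simp), claimP']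
  simp

lemma bb_top (ℓ j : ℕ) (hj : j ≤ ℓ) : (j : ℝ) * bb ℓ (j : ℝ) ℓ = 0 := by
  have h := congrArg (Polynomial.eval (j : ℝ)) (claimD ℓ (j : ℝ) ℓ)
  simp only [eval_mul, eval_sub, eval_X, eval_C, sub_self, zero_mul] at h
  rcases Nat.eq_zero_or_pos j with hj0 | hj0
  · simp [hj0]
  · have hP : (Pg ℓ ℓ).eval (j : ℝ) = 0 := by
      rw [← claimP', eval_prod]
      apply Finset.prod_eq_zero (Finset.mem_Icc.mpr ⟨hj0, hj⟩)
      simp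
    rw [hP] at h
    linarith

lemma prodErase (ℓ j : ℕ) (hj : j < ℓ + 1) :
    ∏ i ∈ (Finset.range (ℓ + 1)).erase j, (X - C (i : ℝ)) = Qg ℓ (j : ℝ) ℓ := by
  apply mul_left_cancel₀ (X_sub_C_ne_zero (j : ℝ))
  rw [claimD, bb_top ℓ j (by omega), map_zero, sub_zero, ← prod_range_eq_X_mul,
    Finset.mul_prod_erase _ (fun i => X - C ((i : ℕ) : ℝ)) (Finset.mem_range.mpr hj)]

lemma eval_prod_erase (ℓ j : ℕ) (hj : j < ℓ + 1) :
    ∏ i ∈ (Finset.range (ℓ + 1)).erase j, ((j : ℝ) - (i : ℕ)) =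
    (-1 : ℝ) ^ (ℓ - j) * (j.factorial : ℝ) * ((ℓ - j).factorial : ℝ) := by
  have hsplit : (Finset.range (ℓ + 1)).erase j =
      Finset.range j ∪ Finset.Ico (j + 1) (ℓ + 1) := by
    ext i
    simp only [Finset.mem_erase, Finset.mem_range, Finset.mem_union, Finset.mem_Ico]
    omega
  have hdisj : Disjoint (Finset.range j) (Finset.Ico (j + 1) (ℓ + 1)) := by
    rw [Finset.disjoint_left]
    intro i hi hi'
    simp only [Finset.mem_range] at hi
    simp only [Finset.mem_Ico] at hi'
    omega
  rw [hsplit, Finset.prod_union hdisj]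
  have h1 : ∏ i ∈ Finset.range j, ((j : ℝ) - (i : ℕ)) = (j.factorial : ℝ) := by
    rw [← Finset.prod_range_reflect]
    have : ∀ k ∈ Finset.range j, ((j : ℝ) - ((j - 1 - k : ℕ) : ℝ)) = ((k + 1 : ℕ) : ℝ) := by
      intro k hk
      have hk' := Finset.mem_range.mp hk
      have : (j - 1 - k : ℕ) = j - (k + 1) := by omega
      rw [this, Nat.cast_sub (by omega)]
      push_cast; ring
    rw [Finset.prod_congr rfl this, ← Nat.cast_prod, Finset.prod_range_add_one_eq_factorial]
  have h2 : ∏ i ∈ Finset.Ico (j + 1) (ℓ + 1), ((j : ℝ) - (i : ℕ)) =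
      (-1 : ℝ) ^ (ℓ - j) * ((ℓ - j).factorial : ℝ) := by
    rw [Finset.prod_Ico_eq_prod_range]
    have hc : ℓ + 1 - (j + 1) = ℓ - j := by omega
    rw [hc]
    have : ∀ k ∈ Finset.range (ℓ - j), ((j : ℝ) - ((j + 1 + k : ℕ) : ℝ)) =
        (-1) * ((k + 1 : ℕ) : ℝ) := by
      intro k _; push_cast; ring
    rw [Finset.prod_congr rfl this, Finset.prod_mul_distrib, Finset.prod_const,
      ← Nat.cast_prod, Finset.prod_range_add_one_eq_factorial]
    simp
  rw [h1, h2]; ring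

lemma sum_Qg_eq (ℓ : ℕ) (K : ℝ) (a : Fin (ℓ + 1) → ℝ) :
    ∑ j : Fin (ℓ + 1),
      C (K * ((-1 : ℝ) ^ (j : ℕ) * (ℓ.choose (j : ℕ) : ℝ) * a j)) * Qg ℓ ((j : ℕ) : ℝ) ℓ =
    C K * ∑ m ∈ Finset.range (ℓ + 1), ∑ k ∈ Finset.range (m + 1),
      C ((-1 : ℝ) ^ (k + m) * tau ℓ (m - k) *
          ∑ j : Fin (ℓ + 1),
            (-1 : ℝ) ^ (j : ℕ) * (ℓ.choose (j : ℕ) : ℝ) * ((j : ℕ) : ℝ) ^ k * a j) *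
        X ^ (ℓ - m) := by
  have key : ∀ m : ℕ,
      ∑ j : Fin (ℓ + 1),
        K * ((-1 : ℝ) ^ (j : ℕ) * (ℓ.choose (j : ℕ) : ℝ) * a j) * bb ℓ ((j : ℕ) : ℝ) m =
      K * ∑ k ∈ Finset.range (m + 1), (-1 : ℝ) ^ (k + m) * tau ℓ (m - k) *
          ∑ j : Fin (ℓ + 1),
            (-1 : ℝ) ^ (j : ℕ) * (ℓ.choose (j : ℕ) : ℝ) * ((j : ℕ) : ℝ) ^ k * a j := by
    intro m
    simp only [bb, Finset.mul_sum, Finset.sum_mul]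
    rw [Finset.sum_comm]
    refine Finset.sum_congr rfl fun j _ => ?_
    refine Finset.sum_congr rfl fun k _ => ?_
    ring
  calc
    ∑ j : Fin (ℓ + 1),
        C (K * ((-1 : ℝ) ^ (j : ℕ) * (ℓ.choose (j : ℕ) : ℝ) * a j)) * Qg ℓ ((j : ℕ) : ℝ) ℓ
      = ∑ m ∈ Finset.range (ℓ + 1),
          C (∑ j : Fin (ℓ + 1),
              K * ((-1 : ℝ) ^ (j : ℕ) * (ℓ.choose (j : ℕ) : ℝ) * a j) * bb ℓ ((j : ℕ) : ℝ) m) *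
            X ^ (ℓ - m) := by
        simp only [Qg, Finset.mul_sum, ← mul_assoc, ← C_mul, map_sum, Finset.sum_mul]
        rw [Finset.sum_comm]
    _ = C K * ∑ m ∈ Finset.range (ℓ + 1), ∑ k ∈ Finset.range (m + 1),
          C ((-1 : ℝ) ^ (k + m) * tau ℓ (m - k) *
              ∑ j : Fin (ℓ + 1),
                (-1 : ℝ) ^ (j : ℕ) * (ℓ.choose (j : ℕ) : ℝ) * ((j : ℕ) : ℝ) ^ k * a j) *
            X ^ (ℓ - m) := by
        rw [Finset.mul_sum]
        refine Finset.sum_congr rfl fun m _ => ?_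
        rw [key m]
        simp only [C_mul, map_sum, Finset.sum_mul, Finset.mul_sum, mul_assoc]

theorem interpolation_expansion (ℓ : ℕ) (hℓ : 1 ≤ ℓ) (a : Fin (ℓ + 1) → ℝ)
    (q : Polynomial ℝ) (hdeg : q.degree ≤ ℓ)
    (hq : ∀ i : Fin (ℓ + 1), q.eval ((i : ℕ) : ℝ) = a i) :
    q = C ((-1 : ℝ) ^ ℓ / (ℓ.factorial : ℝ)) *
        ∑ m ∈ Finset.range (ℓ + 1), ∑ k ∈ Finset.range (m + 1),
          C ((-1 : ℝ) ^ (k + m) * tau ℓ (m - k) *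
              ∑ j : Fin (ℓ + 1),
                (-1 : ℝ) ^ (j : ℕ) * (ℓ.choose (j : ℕ) : ℝ) * ((j : ℕ) : ℝ) ^ k * a j) *
            X ^ (ℓ - m) := by
  classical
  set K : ℝ := (-1 : ℝ) ^ ℓ / (ℓ.factorial : ℝ) with hK
  have hcard : #(Finset.univ : Finset (Fin (ℓ + 1))) = ℓ + 1 := by simp
  have hfac : (ℓ.factorial : ℝ) ≠ 0 := Nat.cast_ne_zero.mpr (Nat.factorial_ne_zero ℓ)
  have hndeg : ∀ j : Fin (ℓ + 1),
      (∏ i ∈ (Finset.range (ℓ + 1)).erase (j : ℕ), (X - C (i : ℝ))).natDegree = ℓ := by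
    intro j
    rw [natDegree_prod _ _ (fun i _ => X_sub_C_ne_zero _),
      Finset.sum_congr rfl (fun i _ => natDegree_X_sub_C (x := ((i : ℕ) : ℝ))),
      Finset.sum_const, smul_eq_mul, mul_one,
      Finset.card_erase_of_mem (Finset.mem_range.mpr j.isLt), Finset.card_range]
    omega
  have hq2 : q = ∑ j : Fin (ℓ + 1),
      C (K * ((-1 : ℝ) ^ (j : ℕ) * (ℓ.choose (j : ℕ) : ℝ) * a j)) *
        ∏ i ∈ (Finset.range (ℓ + 1)).erase (j : ℕ), (X - C (i : ℝ)) := by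
    apply Polynomial.eq_of_degrees_lt_of_eval_index_eq (v := fun i : Fin (ℓ + 1) => ((i : ℕ) : ℝ))
      Finset.univ
    · intro i _ j _ hij
      exact Fin.ext (Nat.cast_injective hij)
    · rw [hcard]
      exact lt_of_le_of_lt hdeg (Nat.cast_lt.mpr (Nat.lt_succ_self ℓ))
    · rw [hcard]
      refine lt_of_le_of_lt (degree_sum_le _ _) ?_
      refine lt_of_le_of_lt (Finset.sup_le fun j _ => ?_) (Nat.cast_lt.mpr (Nat.lt_succ_self ℓ))
      refine le_trans (degree_mul_le _ _) ?_
      refine le_trans (add_le_add degree_C_le (degree_le_natDegree)) ?_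
      rw [hndeg j, zero_add]
    · intro i _
      rw [hq i, eval_finset_sum]
      rw [Finset.sum_eq_single i]
      · simp only [eval_mul, eval_C, eval_prod, eval_sub, eval_X]
        rw [eval_prod_erase ℓ (i : ℕ) i.isLt]
        symm
        have h1 : (-1 : ℝ) ^ (i : ℕ) * (-1 : ℝ) ^ (ℓ - (i : ℕ)) = (-1) ^ ℓ := by
          rw [← pow_add]
          congr 1
          omega
        have h2 : (ℓ.choose (i : ℕ) : ℝ) * ((i : ℕ).factorial : ℝ) *
            ((ℓ - (i : ℕ)).factorial : ℝ) = (ℓ.factorial : ℝ) := by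
          have := Nat.choose_mul_factorial_mul_factorial
            (Nat.lt_succ_iff.mp i.isLt)
          exact_mod_cast congrArg (Nat.cast : ℕ → ℝ) this
        have h3 : (-1 : ℝ) ^ ℓ * (-1 : ℝ) ^ ℓ = 1 := by
          rw [← pow_add]
          exact Even.neg_one_pow ⟨ℓ, rfl⟩
        calc K * ((-1 : ℝ) ^ (i : ℕ) * (ℓ.choose (i : ℕ) : ℝ) * a i) *
              ((-1 : ℝ) ^ (ℓ - (i : ℕ)) * ((i : ℕ).factorial : ℝ) *
                ((ℓ - (i : ℕ)).factorial : ℝ))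
            = ((-1 : ℝ) ^ ℓ * ((-1 : ℝ) ^ (i : ℕ) * (-1 : ℝ) ^ (ℓ - (i : ℕ)))) *
              (((ℓ.choose (i : ℕ) : ℝ) * ((i : ℕ).factorial : ℝ) *
                ((ℓ - (i : ℕ)).factorial : ℝ)) / (ℓ.factorial : ℝ)) * a i := by
              rw [hK]; ring
          _ = a i := by rw [h1, h2, h3, div_self hfac, one_mul, one_mul]
      · intro j _ hji
        simp only [eval_mul, eval_C, eval_prod, eval_sub, eval_X]
        have hmem : (i : ℕ) ∈ (Finset.range (ℓ + 1)).erase (j : ℕ) := by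
          refine Finset.mem_erase.mpr ⟨?_, Finset.mem_range.mpr i.isLt⟩
          exact fun h => hji (Fin.ext h.symm)
        rw [Finset.prod_eq_zero hmem (by simp), mul_zero]
      · intro h
        exact absurd (Finset.mem_univ i) h
  rw [hq2]
  have hpe : ∀ j : Fin (ℓ + 1),
      ∏ i ∈ (Finset.range (ℓ + 1)).erase (j : ℕ), (X - C (i : ℝ)) = Qg ℓ ((j : ℕ) : ℝ) ℓ :=
    fun j => prodErase ℓ (j : ℕ) j.isLt
  simp only [hpe]
  exact sum_Qg_eq ℓ K a
end

section
/- Let ℓ ≥ 1 be an integer, a = (a_0, …, a_ℓ) ∈ ℝ^{ℓ+1}, and let q̂_a be the unique polynomial of degree at most ℓ with q̂_a(i) = a_i for i = 0, …, ℓ. Then for every integer s with 0 ≤ s ≤ ℓ, ((-1)^{ℓ-s} · ℓ!/(ℓ-s)!) · q̂_a^{(ℓ-s)}(0) = ∑_{k=0}^{s} (-1)^k · τ_{ℓ,s-k,0} · (∑_{j=0}^{ℓ} (-1)^j · C(ℓ,j) · j^k · a_j), where τ_{ℓ,m,0} is the m-th elementary symmetric polynomial in 1, …, ℓ (with τ_{ℓ,0,0}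 = 1). -/
open Polynomial Finset Nat

theorem neg_one_pow_mul_neg_one_pow_sub {R : Type*} [Monoid R] [HasDistribNeg R] {m n : ℕ}
    (h : m ≤ n) : (-1 : R) ^ n * (-1) ^ (n - m) = (-1) ^ m := by
  obtain ⟨k, rfl⟩ := Nat.exists_eq_add_of_le h
  rw [add_tsub_cancel_left, pow_add, mul_assoc, ← pow_add, Even.neg_one_pow ⟨k, rfl⟩, mul_one]

namespace Polynomial

section AlternatingBinomialSum

variable {R : Type*} [CommRing R]

noncomputable def alternatingBinomialSum (n : ℕ) : R[X] →ₗ[R] R :=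
  ∑ j ∈ range (n + 1), ((-1 : R) ^ j * n.choose j) • leval (j : R)

@[simp]
theorem alternatingBinomialSum_apply (n : ℕ) (f : R[X]) :
    alternatingBinomialSum n f =
      ∑ j ∈ range (n + 1), (-1) ^ j * n.choose j * f.eval (j : R) := by
  simp [alternatingBinomialSum]

theorem alternatingBinomialSum_eq_neg_one_pow_mul_fwdDiff_iter (n : ℕ) (f : R[X]) :
    alternatingBinomialSum n f = (-1) ^ n * (fwdDiff 1)^[n] f.eval 0 := by
  rw [fwdDiff_iter_eq_sum_shift, alternatingBinomialSum_apply, mul_sum]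
  refine sum_congr rfl fun j hj => ?_
  rw [← neg_one_pow_mul_neg_one_pow_sub (Nat.le_of_lt_succ (mem_range.mp hj))]
  simp only [zero_add, nsmul_one, zsmul_eq_mul, Int.cast_mul, Int.cast_pow, Int.cast_neg,
    Int.cast_one, Int.cast_natCast]
  ring

theorem alternatingBinomialSum_eq_zero_of_degree_lt {n : ℕ} {f : R[X]} (hf : f.degree < n) :
    alternatingBinomialSum n f = 0 := by
  rcases eq_or_ne f 0 with rfl | hf0
  · exact map_zero _
  rw [alternatingBinomialSum_eq_neg_one_pow_mul_fwdDiff_iter,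
    fwdDiff_iter_eq_zero_of_degree_lt ((natDegree_lt_iff_degree_lt hf0).mpr hf), Pi.zero_apply,
    mul_zero]

theorem alternatingBinomialSum_mul_prod_X_sub_C (n : ℕ) (d : R[X]) :
    alternatingBinomialSum n (d * ∏ i ∈ Icc 1 n, (X - C (i : R))) =
      (-1) ^ n * n ! * d.eval 0 := by
  rw [alternatingBinomialSum_apply, sum_eq_single_of_mem 0 (by simp)]
  · have hfact : ∏ i ∈ Icc 1 n, (i : R) = n ! := by
      rw [← Ico_add_one_right_eq_Icc, ← Nat.cast_prod, prod_Ico_id_eq_factorial]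
    simp only [pow_zero, choose_zero_right, Nat.cast_zero, Nat.cast_one, one_mul, eval_mul,
      eval_prod, eval_sub, eval_X, eval_C, zero_sub, prod_neg, hfact, card_Icc,
      add_tsub_cancel_right]
    ring
  · intro j hj hj0
    have hj' : j ∈ Icc 1 n :=
      mem_Icc.mpr ⟨Nat.one_le_iff_ne_zero.mpr hj0, Nat.le_of_lt_succ (mem_range.mp hj)⟩
    rw [eval_mul, eval_prod, prod_eq_zero hj' (by simp), mul_zero, mul_zero]

end AlternatingBinomialSum

theorem degree_mul_lt_of_degree_lt_of_degree_le {R : Type*} [Semiring R] {p q : R[X]} {m n : ℕ}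
    (hp : p.degree < m) (hq : q.degree ≤ n) : (p * q).degree < m + n := by
  rcases eq_or_ne q 0 with rfl | hq0
  · simp
  exact (degree_mul_le p q).trans_lt
    (WithBot.add_lt_add_of_lt_of_le (degree_ne_bot.mpr hq0) hp hq)

theorem eval_zero_divByMonic_X_pow {R : Type*} [CommRing R] [Nontrivial R] (q : R[X]) (k : ℕ) :
    (q /ₘ X ^ k).eval 0 = q.coeff k := by
  conv_rhs => rw [← modByMonic_add_div q (X ^ k)]
  have hr : (q %ₘ X ^ k).degree < k := by
    simpa only [degree_X_pow] using degree_modByMonic_lt q (monic_X_pow (R := R) k)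
  rw [coeff_add, coeff_eq_zero_of_degree_lt hr, coeff_X_pow_mul', if_pos le_rfl, tsub_self,
    zero_add, coeff_zero_eq_eval_zero]

theorem iterate_derivative_eval_zero {R : Type*} [Semiring R] (p : R[X]) (k : ℕ) :
    (derivative^[k] p).eval 0 = k ! * p.coeff k := by
  rw [← coeff_zero_eq_eval_zero, coeff_iterate_derivative, zero_add, descFactorial_self,
    nsmul_eq_mul]

end Polynomial

theorem coeff_prod_Icc_X_sub_C {ℓ m : ℕ} (hm : m ≤ ℓ) :
    (∏ i ∈ Icc 1 ℓ, (X - C (i : ℝ))).coeff m = (-1) ^ (ℓ - m) * tau ℓ (ℓ - m) := by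
  have hcard : Multiset.card ((Icc 1 ℓ).val.map fun i : ℕ => (i : ℝ)) = ℓ := by simp
  have := Multiset.prod_X_sub_C_coeff ((Icc 1 ℓ).val.map fun i : ℕ => (i : ℝ)) (hcard ▸ hm)
  rwa [hcard, Finset.esymm_map_val, Multiset.map_map] at this

noncomputable def tauPoly (ℓ s : ℕ) : ℝ[X] :=
  ∑ k ∈ range (s + 1), C ((-1) ^ k * tau ℓ (s - k)) * X ^ k

theorem eval_tauPoly (ℓ s : ℕ) (x : ℝ) :
    (tauPoly ℓ s).eval x = ∑ k ∈ range (s + 1), (-1) ^ k * tau ℓ (s - k) * x ^ k := by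
  simp [tauPoly, eval_finsetSum]

theorem coeff_tauPoly (ℓ s i : ℕ) :
    (tauPoly ℓ s).coeff i = if i ≤ s then (-1) ^ i * tau ℓ (s - i) else 0 := by
  simp only [tauPoly, finsetSum_coeff, coeff_C_mul_X_pow, sum_ite_eq, mem_range,
    Nat.lt_succ_iff]

theorem degree_tauPoly_le (ℓ s : ℕ) : (tauPoly ℓ s).degree ≤ s := by
  rw [degree_le_iff_coeff_zero]
  intro i hi
  rw [coeff_tauPoly, if_neg (by exact_mod_cast hi.not_ge)]

theorem degree_X_pow_mul_tauPoly_sub_lt {ℓ s : ℕ} (hs : s ≤ ℓ) :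
    (X ^ (ℓ - s) * tauPoly ℓ s - (-1 : ℝ) ^ s • ∏ i ∈ Icc 1 ℓ, (X - C (i : ℝ))).degree
      < ↑(ℓ - s) := by
  rw [degree_lt_iff_coeff_zero]
  intro m hm
  obtain ⟨i, rfl⟩ := Nat.exists_eq_add_of_le hm
  rw [coeff_sub, coeff_smul, coeff_X_pow_mul', if_pos (by omega), add_tsub_cancel_left,
    coeff_tauPoly, smul_eq_mul]
  split_ifs with hi
  · rw [coeff_prod_Icc_X_sub_C (by omega), show ℓ - (ℓ - s + i) = s - i by omega,
      ← neg_one_pow_mul_neg_one_pow_sub hi]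
    ring
  · have hdeg : (∏ i ∈ Icc 1 ℓ, (X - C (i : ℝ))).natDegree < ℓ - s + i := by
      rw [natDegree_finsetProd_X_sub_C_eq_card, card_Icc]
      omega
    rw [coeff_eq_zero_of_natDegree_lt hdeg, mul_zero, sub_zero]

theorem alternatingBinomialSum_mul_tauPoly {ℓ s : ℕ} (hs : s ≤ ℓ) {q : ℝ[X]}
    (hq : q.degree ≤ ℓ) :
    alternatingBinomialSum ℓ (q * tauPoly ℓ s) = (-1) ^ (ℓ - s) * ℓ ! * q.coeff (ℓ - s) := by
  set Q := ∏ i ∈ Icc 1 ℓ, (X - C (i : ℝ))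
  set r := q %ₘ X ^ (ℓ - s)
  set d := q /ₘ X ^ (ℓ - s)
  set E := X ^ (ℓ - s) * tauPoly ℓ s - (-1 : ℝ) ^ s • Q
  have hr : r.degree < ↑(ℓ - s) := by
    simpa only [degree_X_pow] using degree_modByMonic_lt q (monic_X_pow (R := ℝ) (ℓ - s))
  have hd : d.degree ≤ s := by
    refine degree_le_of_natDegree_le ?_
    rw [natDegree_divByMonic _ (monic_X_pow _), natDegree_X_pow]
    have := natDegree_le_iff_degree_le.mpr hq
    omega
  have hsplit : q * tauPoly ℓ s = r * tauPoly ℓ s + E * d + (-1 : ℝ) ^ s • (d * Q) := by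
    have hqrd : q = r + X ^ (ℓ - s) * d := (modByMonic_add_div q _).symm
    rw [hqrd]
    simp only [E, smul_eq_C_mul]
    ring
  have hlow : ((ℓ - s : ℕ) : WithBot ℕ) + s = ℓ := by rw [← Nat.cast_add, Nat.sub_add_cancel hs]
  have hrP := (degree_mul_lt_of_degree_lt_of_degree_le hr (degree_tauPoly_le ℓ s)).trans_eq hlow
  have hEd := (degree_mul_lt_of_degree_lt_of_degree_le
    (degree_X_pow_mul_tauPoly_sub_lt hs) hd).trans_eq hlow
  rw [hsplit, map_add, map_add, map_smul, alternatingBinomialSum_eq_zero_of_degree_lt hrP,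
    alternatingBinomialSum_eq_zero_of_degree_lt hEd, alternatingBinomialSum_mul_prod_X_sub_C,
    eval_zero_divByMonic_X_pow, zero_add, zero_add, smul_eq_mul,
    ← neg_one_pow_mul_neg_one_pow_sub (tsub_le_self : ℓ - s ≤ ℓ), Nat.sub_sub_self hs]
  ring

theorem alternatingBinomialSum_mul_tauPoly_eq_sum (ℓ s : ℕ) (q : ℝ[X]) :
    alternatingBinomialSum ℓ (q * tauPoly ℓ s) =
      ∑ k ∈ range (s + 1), (-1) ^ k * tau ℓ (s - k) *
        ∑ j ∈ range (ℓ + 1), (-1) ^ j * ℓ.choose j * (j : ℝ) ^ k * q.eval (j : ℝ) := by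
  simp only [alternatingBinomialSum_apply, eval_mul, eval_tauPoly, mul_sum]
  rw [sum_comm]
  exact sum_congr rfl fun k _ => sum_congr rfl fun j _ => by ring

theorem deriv_interpolation_at_zero_general (ℓ : ℕ) (a : Fin (ℓ + 1) → ℝ)
    (q : Polynomial ℝ) (hdeg : q.degree ≤ ℓ)
    (hq : ∀ i : Fin (ℓ + 1), q.eval ((i : ℕ) : ℝ) = a i)
    (s : ℕ) (hs : s ≤ ℓ) :
    (-1 : ℝ) ^ (ℓ - s) * (ℓ.factorial : ℝ) / ((ℓ - s).factorial : ℝ) *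
        (Polynomial.derivative^[ℓ - s] q).eval 0 =
      ∑ k ∈ Finset.range (s + 1),
        (-1 : ℝ) ^ k * tau ℓ (s - k) *
          ∑ j : Fin (ℓ + 1),
            (-1 : ℝ) ^ (j : ℕ) * (ℓ.choose (j : ℕ) : ℝ) * ((j : ℕ) : ℝ) ^ k * a j := by
  have hvalues (k : ℕ) :
      ∑ j : Fin (ℓ + 1), (-1 : ℝ) ^ (j : ℕ) * (ℓ.choose (j : ℕ) : ℝ) * ((j : ℕ) : ℝ) ^ k * a j =
        ∑ j ∈ range (ℓ + 1), (-1) ^ j * ℓ.choose j * (j : ℝ) ^ k * q.eval (j : ℝ) := by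
    simp only [← hq]
    exact Fin.sum_univ_eq_sum_range
      (fun j => (-1) ^ j * ℓ.choose j * (j : ℝ) ^ k * q.eval (j : ℝ)) _
  calc (-1 : ℝ) ^ (ℓ - s) * ℓ ! / (ℓ - s)! * (derivative^[ℓ - s] q).eval 0
      = (-1) ^ (ℓ - s) * ℓ ! * q.coeff (ℓ - s) := by
        rw [iterate_derivative_eval_zero]
        field_simp
    _ = alternatingBinomialSum ℓ (q * tauPoly ℓ s) :=
        (alternatingBinomialSum_mul_tauPoly hs hdeg).symm
    _ = _ := by rw [alternatingBinomialSum_mul_tauPoly_eq_sum]; simp only [hvalues]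

theorem deriv_interpolation_at_zero (ℓ : ℕ) (hℓ : 1 ≤ ℓ) (a : Fin (ℓ + 1) → ℝ)
    (q : Polynomial ℝ) (hdeg : q.degree ≤ ℓ)
    (hq : ∀ i : Fin (ℓ + 1), q.eval ((i : ℕ) : ℝ) = a i)
    (s : ℕ) (hs : s ≤ ℓ) :
    (-1 : ℝ) ^ (ℓ - s) * (ℓ.factorial : ℝ) / ((ℓ - s).factorial : ℝ) *
        (Polynomial.derivative^[ℓ - s] q).eval 0 =
      ∑ k ∈ Finset.range (s + 1),
        (-1 : ℝ) ^ k * tau ℓ (s - k) *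
          ∑ j : Fin (ℓ + 1),
            (-1 : ℝ) ^ (j : ℕ) * (ℓ.choose (j : ℕ) : ℝ) * ((j : ℕ) : ℝ) ^ k * a j :=
  deriv_interpolation_at_zero_general ℓ a q hdeg hq s hs
end
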